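/- arXiv:2408.09415 — 13 statements merged into one kernel-verified Lean document; each statement's English description precedes it below -/
import Mathlib

section
/- Under the structural assumption, for every i ∈ S \ F the set S \ {i} d-separates y and t, i.e. S \ {i} ∈ 𝒜. -/
/-!  A graph-theoretic framework for d-separation in a finite directed acyclic
graph with vertex set `{y, t} ∪ S`, following the paper's conventions. -/

/-- Two vertices are adjacent if there is an edge between them in either direction. -/
def Adj {V : Type*} (E : V → V → Prop) (a b : V) : Prop := E a b ∨ E b a

/-- The full vertex sequence of a candidate path between `y` and `t` whose list of
intermediate vertices is `p`. -/
def pathSeq {V : Type*} (y t : V) (p : List V) : List V := y :: (p ++ [t])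

/-- `p` is the list of intermediate vertices of a path between `y` and `t`:
consecutive vertices of the full sequence `y :: p ++ [t]` are joined by an edge of
the graph (in either direction), and all vertices of the full sequence are
pairwise distinct. -/
def IsPath {V : Type*} (E : V → V → Prop) (y t : V) (p : List V) : Prop :=
  List.Chain' (Adj E) (pathSeq y t p) ∧ (pathSeq y t p).Nodup

/-- `v` is a collider of the path: it is an intermediate vertex and both edges of
the path adjacent to it point into it. -/
def IsCollider {V : Type*} (E : V → V → Prop) (y t : V) (p : List V) (v : V) : Prop :=
  v ∈ p ∧ ∃ a b, [a, v, b] <:+: pathSeq y t p ∧ E a v ∧ E b v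

/-- `v` is a non-collider of the path: an intermediate vertex that is not a collider. -/
def IsNonCollider {V : Type*} (E : V → V → Prop) (y t : V) (p : List V) (v : V) : Prop :=
  v ∈ p ∧ ¬ IsCollider E y t p v

/-- `d` is a descendant of `c`: there is a directed path of length ≥ 1 from `c` to `d`. -/
def Descendant {V : Type*} (E : V → V → Prop) (c d : V) : Prop := Relation.TransGen E c d

/-- The path with intermediate vertices `p` is blocked by the set `A`: some
non-collider of the path belongs to `A`, or some collider `c` of the path is such
that neither `c` nor any descendant of `c` belongs to `A`. -/
def Blocked {V : Type*} (E : V → V → Prop) (y t : V) (A : Set V) (p : List V) : Prop :=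
  (∃ v, IsNonCollider E y t p v ∧ v ∈ A) ∨
    (∃ c, IsCollider E y t p c ∧ c ∉ A ∧ ∀ d, Descendant E c d → d ∉ A)

/-- `A` d-separates `y` and `t`: `A ⊆ S` and every path between `y` and `t` is
blocked by `A`.  (`A ∈ 𝒜` in the paper's notation.) -/
def DSep {V : Type*} (E : V → V → Prop) (y t : V) (S A : Set V) : Prop :=
  A ⊆ S ∧ ∀ p, IsPath E y t p → Blocked E y t A p

/-- The directed graph is acyclic. -/
def Acyclic {V : Type*} (E : V → V → Prop) : Prop := ∀ v, ¬ Relation.TransGen E v v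

/-- Structural assumption: every edge incident to `y` has head `y` and tail in `S`,
and every edge incident to `t` has head `t` and tail in `S`. -/
def Structural {V : Type*} (E : V → V → Prop) (y t : V) (S : Set V) : Prop :=
  (∀ a, ¬ E y a) ∧ (∀ a, ¬ E t a) ∧ (∀ a, E a y → a ∈ S) ∧ (∀ a, E a t → a ∈ S)

/-- `A` is a locally minimal element of `𝒜`: it d-separates `y` and `t` and no
proper subset of it does. -/
def LocallyMinimal {V : Type*} (E : V → V → Prop) (y t : V) (S A : Set V) : Prop :=
  DSep E y t S A ∧ ∀ B, B ⊂ A → ¬ DSep E y t S B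

/-- `A ∈ 𝒩`: `A` d-separates `y` and `t` and so does every `B` with `A ⊆ B ⊆ S`. -/
def InN {V : Type*} (E : V → V → Prop) (y t : V) (S A : Set V) : Prop :=
  DSep E y t S A ∧ ∀ B, A ⊆ B → B ⊆ S → DSep E y t S B

/-! On a path between `y` and `t`, the structural assumption forces the first intermediate
vertex to be a parent of `y` and the last one a parent of `t`; both are therefore non-colliders
lying in `S`. They can only both equal a given vertex `i` when the path is `y ← i → t`, which
makes `i` a common parent. -/

theorem List.Nodup.eq_of_infix_cons_cons {α : Type*} {a b v y : α} {l : List α}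
    (hnd : (y :: v :: l).Nodup) (h : [a, v, b] <:+: y :: v :: l) : a = y := by
  obtain ⟨s, e, hs⟩ := h
  rcases s with _ | ⟨x, _ | ⟨z, s⟩⟩
  · simp only [List.nil_append, List.cons_append, List.cons.injEq] at hs
    exact hs.1
  · simp only [List.cons_append, List.nil_append, List.cons.injEq] at hs
    obtain ⟨-, -, rfl⟩ := hs
    simp at hnd
  · simp only [List.cons_append, List.cons.injEq] at hs
    obtain ⟨-, rfl, rfl⟩ := hs
    simp at hnd

theorem List.Nodup.eq_of_infix_append_pair {α : Type*} {a b w t : α} {l : List α}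
    (hnd : (l ++ [w, t]).Nodup) (h : [a, w, b] <:+: l ++ [w, t]) : b = t := by
  have hrev : (l ++ [w, t]).reverse = t :: w :: l.reverse := by simp
  have hnd' : (t :: w :: l.reverse).Nodup := hrev ▸ List.nodup_reverse.mpr hnd
  exact hnd'.eq_of_infix_cons_cons (by simpa [hrev] using List.reverse_infix.mpr h)

section Path

variable {V : Type*} {E : V → V → Prop} {y t v w : V} {q : List V}

theorem pathSeq_append_singleton : pathSeq y t (q ++ [w]) = y :: q ++ [w, t] := by
  simp [pathSeq]

theorem IsPath.adj_of_nil (hp : IsPath E y t []) : Adj E y t :=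
  List.isChain_pair.mp hp.1

theorem IsPath.adj_head (hp : IsPath E y t (v :: q)) : Adj E y v :=
  hp.1.rel

theorem IsPath.adj_last (hp : IsPath E y t (q ++ [w])) : Adj E w t := by
  have hchain := hp.1
  rw [pathSeq_append_singleton] at hchain
  exact List.isChain_pair.mp (List.isChain_append.mp hchain).2.1

theorem IsPath.head_ne_last (hp : IsPath E y t (v :: (q ++ [w]))) : v ≠ w := by
  have hnd := hp.2
  simp only [pathSeq, List.cons_append, List.append_assoc, List.nodup_cons, List.mem_append,
    List.mem_cons] at hnd
  grind

theorem IsPath.isNonCollider_head (hp : IsPath E y t (v :: q)) (hyv : ¬ E y v) :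
    IsNonCollider E y t (v :: q) v := by
  refine ⟨List.mem_cons_self, fun ⟨_, a, b, hinf, hav, _⟩ => hyv ?_⟩
  rwa [← hp.2.eq_of_infix_cons_cons hinf]

theorem IsPath.isNonCollider_last (hp : IsPath E y t (q ++ [w])) (htw : ¬ E t w) :
    IsNonCollider E y t (q ++ [w]) w := by
  refine ⟨by simp, fun ⟨_, a, b, hinf, _, hbw⟩ => htw ?_⟩
  have hnd := hp.2
  rw [pathSeq_append_singleton] at hinf hnd
  rwa [← hnd.eq_of_infix_append_pair hinf]

end Path

theorem stmt1_general {V : Type*} (E : V → V → Prop) (y t : V) (S : Set V)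
    (hstruct : Structural E y t S) :
    ∀ i ∈ S \ {j | j ∈ S ∧ E j y ∧ E j t}, DSep E y t S (S \ {i}) := by
  obtain ⟨hEy, hEt, hparent_y, hparent_t⟩ := hstruct
  rintro i ⟨-, hiF⟩
  refine ⟨Set.sdiff_subset, fun p hp => Or.inl ?_⟩
  obtain ⟨v, q, rfl⟩ : ∃ v q, p = v :: q := by
    refine List.exists_cons_of_ne_nil fun hnil => ?_
    subst hnil
    exact hp.adj_of_nil.elim (hEy t) (hEt y)
  have hvy : E v y := hp.adj_head.resolve_left (hEy v)
  have hv := hp.isNonCollider_head (hEy v)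
  rcases List.eq_nil_or_concat' q with rfl | ⟨r, w, rfl⟩
  · have hvt : E v t := (hp.adj_last (q := [])).resolve_right (hEt v)
    refine ⟨v, hv, hparent_y v hvy, ?_⟩
    rintro rfl
    exact hiF ⟨hparent_y v hvy, hvy, hvt⟩
  · have hp' : IsPath E y t (v :: r ++ [w]) := hp
    have hwt : E w t := hp'.adj_last.resolve_right (hEt w)
    by_cases hvi : v = i
    · exact ⟨w, hp'.isNonCollider_last (hEt w), hparent_t w hwt,
        fun hwi => hp.head_ne_last (hvi.trans hwi.symm)⟩
    · exact ⟨v, hv, hparent_y v hvy, hvi⟩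

/-- under the structural assumption, for every `i ∈ S \ F`, where
`F` is the set of common parents of `y` and `t`, the set `S \ {i}` d-separates
`y` and `t`. -/
theorem stmt1 {V : Type*} [Fintype V] (E : V → V → Prop) (y t : V) (S : Set V)
    (hyt : y ≠ t) (hyS : y ∉ S) (htS : t ∉ S)
    (hcover : ∀ v, v = y ∨ v = t ∨ v ∈ S)
    (hacyc : Acyclic E)
    (hstruct : Structural E y t S) :
    ∀ i ∈ S \ {j | j ∈ S ∧ E j y ∧ E j t}, DSep E y t S (S \ {i}) :=
  stmt1_general E y t S hstruct
end

section
/- Under the structural assumption, F ∈ 𝒜 if and only if 𝒜 has exactly one locally minimal element; moreover, in that case F is that unique locally minimal element and F ⊆ A for every A ∈ 𝒜 (Proposition 1(ii) of the paper, stated graph-theoretically). -/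
/-!
Every path between `y` and `t` starts with an edge `y ← v` and ends with an edge `w → t`, so its
first and last intermediate vertices are non-colliders lying in `S`. Hence a common parent `i`
lies in every `A ∈ 𝒜` (the path `y ← i → t` must be blocked at `i`), while for `x ∈ S \ F` the set
`S \ {x}` is in `𝒜` (every path is blocked at its first or last intermediate vertex, and these
cannot both be `x`). Consequently, if `F ∈ 𝒜` it is the least element of `𝒜`; and if `A` is the only
locally minimal element, then `A` lies inside a locally minimal subset of each `S \ {x}`, `x ∉ F`,
so `A ⊆ F` and `A = F`.
-/

namespace List

variable {α : Type*}

theorem Nodup.eq_of_triple_infix_cons_cons {a b y v : α} {l : List α}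
    (hl : (y :: v :: l).Nodup) (h : [a, v, b] <:+: y :: v :: l) : a = y := by
  have hv : v ∉ l := (nodup_cons.mp hl.of_cons).1
  rcases infix_cons_iff.mp h with h | h
  · exact (cons_prefix_cons.mp h).1
  rcases infix_cons_iff.mp h with h | h
  · obtain ⟨-, h⟩ := cons_prefix_cons.mp h
    exact absurd (h.subset (mem_cons_self ..)) hv
  · exact absurd (h.subset (by simp)) hv

end List

section DSeparation

variable {V : Type*} {E : V → V → Prop} {y t : V} {S : Set V}

/-- The set `F` of common parents of `y` and `t`. -/
def commonParents (E : V → V → Prop) (y t : V) (S : Set V) : Set V :=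
  {j | j ∈ S ∧ E j y ∧ E j t}

namespace IsPath

theorem ne_nil (hy : ∀ a, ¬ E y a) (ht : ∀ a, ¬ E t a) {p : List V} (hp : IsPath E y t p) :
    p ≠ [] := by
  rintro rfl
  rcases (List.isChain_cons_cons.mp hp.1).1 with h | h
  · exact hy t h
  · exact ht y h

theorem edge_head (hy : ∀ a, ¬ E y a) {v : V} {p : List V} (hp : IsPath E y t (v :: p)) :
    E v y :=
  (List.isChain_cons_cons.mp hp.1).1.resolve_left (hy v)

theorem edge_getLast (ht : ∀ a, ¬ E t a) {w : V} {p : List V} (hp : IsPath E y t (p ++ [w])) :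
    E w t := by
  have hsuffix : [w, t] <:+ pathSeq y t (p ++ [w]) := ⟨y :: p, by simp [pathSeq]⟩
  exact (List.isChain_cons_cons.mp (hp.1.suffix hsuffix)).1.resolve_right (ht w)

theorem not_isCollider_head (hy : ∀ a, ¬ E y a) {v : V} {p : List V}
    (hp : IsPath E y t (v :: p)) : ¬ IsCollider E y t (v :: p) v := by
  rintro ⟨-, a, b, hinfix, hav, -⟩
  have hnodup : (y :: v :: (p ++ [t])).Nodup := hp.2
  exact hy v (hnodup.eq_of_triple_infix_cons_cons hinfix ▸ hav)

theorem not_isCollider_getLast (ht : ∀ a, ¬ E t a) {w : V} {p : List V}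
    (hp : IsPath E y t (p ++ [w])) : ¬ IsCollider E y t (p ++ [w]) w := by
  rintro ⟨-, a, b, hinfix, -, hbw⟩
  have hseq : (pathSeq y t (p ++ [w])).reverse = t :: w :: (p.reverse ++ [y]) := by
    simp [pathSeq]
  have hinfix' : [b, w, a] <:+: t :: w :: (p.reverse ++ [y]) := by
    rw [← hseq]; simpa using List.reverse_infix.mpr hinfix
  have hnodup : (t :: w :: (p.reverse ++ [y])).Nodup := by
    rw [← hseq]; exact List.nodup_reverse.mpr hp.2
  exact ht w (hnodup.eq_of_triple_infix_cons_cons hinfix' ▸ hbw)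

end IsPath

theorem commonParents_subset_of_dSep (hyt : y ≠ t) (hy : ∀ a, ¬ E y a) (ht : ∀ a, ¬ E t a)
    {A : Set V} (hA : DSep E y t S A) : commonParents E y t S ⊆ A := by
  rintro i ⟨-, hiy, hit⟩
  have hpath : IsPath E y t [i] := by
    refine ⟨List.isChain_cons_cons.mpr ⟨Or.inr hiy, List.isChain_pair.mpr (Or.inl hit)⟩, ?_⟩
    have hyi : y ≠ i := by rintro rfl; exact hy y hiy
    have hit' : i ≠ t := by rintro rfl; exact ht i hit
    simp [pathSeq, hyt, hyi, hit']
  rcases hA.2 [i] hpath with ⟨v, ⟨hv, -⟩, hvA⟩ | ⟨c, hcol, -⟩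
  · rwa [List.mem_singleton.mp hv] at hvA
  · rw [List.mem_singleton.mp hcol.1] at hcol
    exact absurd hcol (hpath.not_isCollider_head hy)

theorem dSep_diff_singleton (hstruct : Structural E y t S) {x : V}
    (hx : x ∉ commonParents E y t S) : DSep E y t S (S \ {x}) := by
  obtain ⟨hy, ht, hSy, hSt⟩ := hstruct
  refine ⟨Set.sdiff_subset, fun p hp => Or.inl ?_⟩
  obtain ⟨v, q, rfl⟩ := List.exists_cons_of_ne_nil (hp.ne_nil hy ht)
  have hvy : E v y := hp.edge_head hy
  by_cases hvx : v = x
  · subst hvx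
    have hvt : ¬ E v t := fun hvt => hx ⟨hSy v hvy, hvy, hvt⟩
    obtain ⟨r, w, hrw⟩ : ∃ r w, v :: q = r ++ [w] :=
      ⟨_, _, (List.dropLast_append_getLast (List.cons_ne_nil v q)).symm⟩
    rw [hrw] at hp ⊢
    have hwt : E w t := hp.edge_getLast ht
    refine ⟨w, ⟨by simp, hp.not_isCollider_getLast ht⟩, hSt w hwt, ?_⟩
    rintro rfl
    exact hvt hwt
  · exact ⟨v, ⟨List.mem_cons_self, hp.not_isCollider_head hy⟩, hSy v hvy, hvx⟩

theorem exists_locallyMinimal_subset [Finite V] {C : Set V} (hC : DSep E y t S C) :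
    ∃ B ⊆ C, LocallyMinimal E y t S B := by
  obtain ⟨B, hBC, hB⟩ := exists_minimal_le_of_wellFoundedLT (DSep E y t S) C hC
  exact ⟨B, hBC, hB.prop, fun _ hDB => hB.not_prop_of_lt hDB⟩

theorem LocallyMinimal.eq_of_subset {A B : Set V} (hA : LocallyMinimal E y t S A)
    (hB : DSep E y t S B) (hBA : B ⊆ A) : B = A := by
  by_contra hne
  exact hA.2 B (lt_of_le_of_ne hBA hne) hB

theorem locallyMinimal_of_forall_subset {F : Set V} (hF : DSep E y t S F)
    (hleast : ∀ A, DSep E y t S A → F ⊆ A) : LocallyMinimal E y t S F :=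
  ⟨hF, fun B hBF hB => hBF.not_subset (hleast B hB)⟩

end DSeparation

theorem stmt4_general {V : Type*} [Fintype V] (E : V → V → Prop) (y t : V) (S : Set V)
    (hyt : y ≠ t)
    (hstruct : Structural E y t S) :
    (DSep E y t S {j | j ∈ S ∧ E j y ∧ E j t} ↔
      (∃! A, LocallyMinimal E y t S A)) ∧
    (DSep E y t S {j | j ∈ S ∧ E j y ∧ E j t} →
      LocallyMinimal E y t S {j | j ∈ S ∧ E j y ∧ E j t} ∧
      ∀ A, DSep E y t S A → {j | j ∈ S ∧ E j y ∧ E j t} ⊆ A) := by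
  change (DSep E y t S (commonParents E y t S) ↔ _) ∧ (DSep E y t S (commonParents E y t S) → _)
  set F := commonParents E y t S
  have hleast : ∀ A, DSep E y t S A → F ⊆ A := fun _ =>
    commonParents_subset_of_dSep hyt hstruct.1 hstruct.2.1
  refine ⟨⟨fun hF => ⟨F, locallyMinimal_of_forall_subset hF hleast,
    fun A hA => (hA.eq_of_subset hF (hleast A hA.1)).symm⟩, ?_⟩,
    fun hF => ⟨locallyMinimal_of_forall_subset hF hleast, hleast⟩⟩
  rintro ⟨A, hA, hunique⟩
  have hAF : A ⊆ F := by
    intro x hxA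
    by_contra hx
    obtain ⟨B, hBx, hB⟩ := exists_locallyMinimal_subset (dSep_diff_singleton hstruct hx)
    exact (hBx (hunique B hB ▸ hxA)).2 rfl
  exact hAF.antisymm (hleast A hA.1) ▸ hA.1

/-- Proposition 1(ii): under the structural assumption, with `F`
the set of common parents of `y` and `t`, `F ∈ 𝒜` if and only if `𝒜` has exactly
one locally minimal element; moreover, in that case `F` is that unique locally
minimal element and `F ⊆ A` for every `A ∈ 𝒜`. -/
theorem stmt4 {V : Type*} [Fintype V] (E : V → V → Prop) (y t : V) (S : Set V)
    (hyt : y ≠ t) (hyS : y ∉ S) (htS : t ∉ S)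
    (hcover : ∀ v, v = y ∨ v = t ∨ v ∈ S)
    (hacyc : Acyclic E)
    (hstruct : Structural E y t S) :
    (DSep E y t S {j | j ∈ S ∧ E j y ∧ E j t} ↔
      (∃! A, LocallyMinimal E y t S A)) ∧
    (DSep E y t S {j | j ∈ S ∧ E j y ∧ E j t} →
      LocallyMinimal E y t S {j | j ∈ S ∧ E j y ∧ E j t} ∧
      ∀ A, DSep E y t S A → {j | j ∈ S ∧ E j y ∧ E j t} ⊆ A) :=
  stmt4_general E y t S hyt hstruct
end

section
/- If A ∈ 𝒜 and i ∈ S satisfy A \ {i} ∉ 𝒜, then there exists a path between y and t on which i lies as a non-collider (Proposition 2(i), first claim). -/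
/-- Proposition 2(i), first claim: if `A ∈ 𝒜` and `i ∈ S` satisfy
`A \ {i} ∉ 𝒜`, then there exists a path between `y` and `t` on which `i` lies as
a non-collider. -/
theorem stmt5 {V : Type*} [Fintype V] (E : V → V → Prop) (y t : V) (S : Set V)
    (hyt : y ≠ t) (hyS : y ∉ S) (htS : t ∉ S)
    (hcover : ∀ v, v = y ∨ v = t ∨ v ∈ S)
    (hacyc : Acyclic E)
    (A : Set V) (i : V) (hiS : i ∈ S)
    (hA : DSep E y t S A) (hAi : ¬ DSep E y t S (A \ {i})) :
    ∃ p, IsPath E y t p ∧ IsNonCollider E y t p i := by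
  obtain ⟨hAS, hblock⟩ := hA
  have hsub : A \ {i} ⊆ S := fun x hx => hAS hx.1
  rw [DSep, not_and] at hAi
  push_neg at hAi
  obtain ⟨p, hp, hnb⟩ := hAi hsub
  rcases hblock p hp with ⟨v, hv, hvA⟩ | ⟨c, hc, hcA, hdesc⟩
  · by_cases hvi : v = i
    · exact ⟨p, hp, hvi ▸ hv⟩
    · exact absurd (Or.inl ⟨v, hv, hvA, hvi⟩) hnb
  · exact absurd (Or.inr ⟨c, hc, fun h => hcA h.1,
      fun d hd h => hdesc d hd h.1⟩) hnb
end

section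
/- If A ∈ 𝒩, i ∈ S, A \ {i} ∈ 𝒜 and A \ {i} ∉ 𝒩, then there exists a path between y and t that contains at least one collider and on which i lies as a non-collider (Proposition 2(i), second claim). -/
/-- Proposition 2(i), second claim: if `A ∈ 𝒩`, `i ∈ S`,
`A \ {i} ∈ 𝒜` and `A \ {i} ∉ 𝒩`, then there exists a path between `y` and `t`
that contains at least one collider and on which `i` lies as a non-collider. -/
theorem stmt6 {V : Type*} [Fintype V] (E : V → V → Prop) (y t : V) (S : Set V)
    (hyt : y ≠ t) (hyS : y ∉ S) (htS : t ∉ S)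
    (hcover : ∀ v, v = y ∨ v = t ∨ v ∈ S)
    (hacyc : Acyclic E)
    (A : Set V) (i : V) (hiS : i ∈ S)
    (hA : InN E y t S A) (hAi : DSep E y t S (A \ {i}))
    (hAiN : ¬ InN E y t S (A \ {i})) :
    ∃ p, IsPath E y t p ∧ (∃ c, IsCollider E y t p c) ∧
      IsNonCollider E y t p i := by
  rw [InN, not_and] at hAiN
  have h := hAiN hAi
  push_neg at h
  obtain ⟨B, hBsub, hBS, hBnot⟩ := h
  have h2 : ¬ ∀ p, IsPath E y t p → Blocked E y t B p := fun hh => hBnot ⟨hBS, hh⟩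
  push_neg at h2
  obtain ⟨p, hp, hnb⟩ := h2
  have hABi : A ⊆ B ∪ {i} := by
    intro a ha
    by_cases hai : a = i
    · exact Or.inr hai
    · exact Or.inl (hBsub ⟨ha, hai⟩)
  have hBiS : B ∪ {i} ⊆ S := Set.union_subset hBS (by simpa using hiS)
  have hblk : Blocked E y t (B ∪ {i}) p := (hA.2 _ hABi hBiS).2 p hp
  rw [Blocked, not_or] at hnb
  obtain ⟨hnb1, hnb2⟩ := hnb
  push_neg at hnb1 hnb2
  have hinc : IsNonCollider E y t p i := by
    rcases hblk with ⟨v, hv, hvB⟩ | ⟨c, hc, hcB, hcd⟩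
    · rcases hvB with hvB | hvB
      · exact absurd hvB (hnb1 v hv)
      · simp only [Set.mem_singleton_iff] at hvB; subst hvB; exact hv
    · exfalso
      have hcB' : c ∉ B := fun hmem => hcB (Or.inl hmem)
      obtain ⟨d, hd, hdB⟩ := hnb2 c hc hcB'
      exact hcd d hd (Or.inl hdB)
  refine ⟨p, hp, ?_, hinc⟩
  by_contra hnoc
  push_neg at hnoc
  have hblk2 : Blocked E y t (A \ {i}) p := hAi.2 p hp
  rcases hblk2 with ⟨v, hv, hvA⟩ | ⟨c, hc, _⟩
  · exact hnb1 v hv (hBsub hvA)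
  · exact hnoc c hc
end

section
/- Let A ∈ 𝒜 and B ⊆ S be such that A ∪ B ∉ 𝒜 while A ∪ C ∈ 𝒜 for every proper subset C ⊊ B. Then there exists a single path P between y and t such that every element of B is either a collider of P or a descendant of a collider of P (Proposition 2(ii)). -/
/-- Proposition 2(ii): if `A ∈ 𝒜` and `B ⊆ S` are such that
`A ∪ B ∉ 𝒜` while `A ∪ C ∈ 𝒜` for every proper subset `C ⊊ B`, then there is a
single path `p` between `y` and `t` such that every element of `B` is either a
collider of `p` or a descendant of a collider of `p`. -/
theorem stmt7 {V : Type*} [Fintype V] (E : V → V → Prop) (y t : V) (S : Set V)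
    (hyt : y ≠ t) (hyS : y ∉ S) (htS : t ∉ S)
    (hcover : ∀ v, v = y ∨ v = t ∨ v ∈ S)
    (hacyc : Acyclic E)
    (A B : Set V) (hA : DSep E y t S A) (hB : B ⊆ S)
    (hAB : ¬ DSep E y t S (A ∪ B))
    (hAC : ∀ C, C ⊂ B → DSep E y t S (A ∪ C)) :
    ∃ p, IsPath E y t p ∧ ∀ b ∈ B,
      IsCollider E y t p b ∨ ∃ c, IsCollider E y t p c ∧ Descendant E c b := by
  have hsub : A ∪ B ⊆ S := Set.union_subset hA.1 hB
  obtain ⟨p, hp, hnb⟩ : ∃ p, IsPath E y t p ∧ ¬ Blocked E y t (A ∪ B) p := by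
    by_contra h
    push_neg at h
    exact hAB ⟨hsub, h⟩
  rw [Blocked] at hnb
  push_neg at hnb
  obtain ⟨hnc, hcol⟩ := hnb
  refine ⟨p, hp, fun b hb => ?_⟩
  have hC : B \ {b} ⊂ B := by
    constructor
    · exact Set.diff_subset
    · intro hle
      exact (hle hb).2 rfl
  obtain ⟨v, hvnc, hv⟩ | ⟨c, hc, hcnot, hd⟩ := (hAC _ hC).2 p hp
  · exact absurd (Set.union_subset_union_right A Set.diff_subset hv) (hnc v hvnc)
  · by_cases hcin : c ∈ A ∪ B
    · left
      have : c = b := by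
        rcases hcin with h | h
        · exact absurd (Or.inl h) hcnot
        · by_contra hne
          exact hcnot (Or.inr ⟨h, hne⟩)
      rwa [← this]
    · obtain ⟨d, hdd, hdin⟩ := hcol c hc hcin
      have : d = b := by
        have hdnot := hd d hdd
        rcases hdin with h | h
        · exact absurd (Or.inl h) hdnot
        · by_contra hne
          exact hdnot (Or.inr ⟨h, hne⟩)
      exact Or.inr ⟨c, hc, this ▸ hdd⟩
end

section
/- If A is a locally minimal element of 𝒜, then for every i ∈ A there exists a path between y and t on which i lies as a non-collider (corollary to Proposition 2(i)). -/
/-- corollary to Proposition 2(i): if `A` is a locally minimal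
element of `𝒜`, then for every `i ∈ A` there exists a path between `y` and `t`
on which `i` lies as a non-collider. -/
theorem stmt8 {V : Type*} [Fintype V] (E : V → V → Prop) (y t : V) (S : Set V)
    (hyt : y ≠ t) (hyS : y ∉ S) (htS : t ∉ S)
    (hcover : ∀ v, v = y ∨ v = t ∨ v ∈ S)
    (hacyc : Acyclic E)
    (A : Set V) (hA : LocallyMinimal E y t S A) :
    ∀ i ∈ A, ∃ p, IsPath E y t p ∧ IsNonCollider E y t p i := by
  intro i hi
  have hsub : A \ {i} ⊂ A := Set.sdiff_singleton_ssubset.mpr hi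
  have hnd : ¬ DSep E y t S (A \ {i}) := hA.2 _ hsub
  have hBS : A \ {i} ⊆ S := fun x hx => hA.1.1 hx.1
  -- extract an unblocked path
  have : ∃ p, IsPath E y t p ∧ ¬ Blocked E y t (A \ {i}) p := by
    by_contra h
    push_neg at h
    exact hnd ⟨hBS, fun p hp => h p hp⟩
  obtain ⟨p, hp, hnb⟩ := this
  have hb : Blocked E y t A p := hA.1.2 p hp
  rcases hb with ⟨v, hv, hvA⟩ | ⟨c, hc, hcA, hdesc⟩
  · refine ⟨p, hp, ?_⟩
    have hvi : v = i := by
      by_contra hne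
      exact hnb (Or.inl ⟨v, hv, ⟨hvA, hne⟩⟩)
    rwa [hvi] at hv
  · exact absurd (Or.inr ⟨c, hc, fun h => hcA h.1,
      fun d hd hdA => hdesc d hd hdA.1⟩) hnb
end

section
/- For every A ⊆ S: A ∈ 𝒩 if and only if every path between y and t contains a non-collider that belongs to A (characterization of 𝒩 from the proof of Proposition 2). -/
/-! A non-collider of a path that lies in `A` still lies in every `B ⊇ A`, so it blocks the
path for all such `B`. Conversely, if a path `p` has no non-collider in `A`, enlarge `A` to
`B = S \ {non-colliders of p outside A}`. Every intermediate vertex of `p` lies in `S`, so `B`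
contains all colliders of `p`, and `p` can only be blocked by a non-collider in `B`; such a
non-collider lies in `A`, a contradiction. -/

section

variable {V : Type*} {E : V → V → Prop} {y t : V} {S A : Set V} {p : List V}

lemma IsPath.ne_endpoints (hp : IsPath E y t p) {v : V} (hv : v ∈ p) : v ≠ y ∧ v ≠ t := by
  obtain ⟨hy, hnd⟩ := List.nodup_cons.mp hp.2
  refine ⟨fun h => hy (List.mem_append_left _ (h ▸ hv)), fun h => ?_⟩
  exact (List.nodup_append.mp hnd).2.2 v hv t (List.mem_singleton_self t) h

lemma IsPath.mem_of_mem (hcover : ∀ v, v = y ∨ v = t ∨ v ∈ S) (hp : IsPath E y t p)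
    {v : V} (hv : v ∈ p) : v ∈ S := by
  have ⟨hvy, hvt⟩ := hp.ne_endpoints hv
  exact ((hcover v).resolve_left hvy).resolve_left hvt

lemma exists_nonCollider_mem_of_forall_blocked (hpS : ∀ v ∈ p, v ∈ S) (hAS : A ⊆ S)
    (hblocked : ∀ B, A ⊆ B → B ⊆ S → Blocked E y t B p) :
    ∃ v, IsNonCollider E y t p v ∧ v ∈ A := by
  by_contra! hnone
  set B : Set V := S \ {v | IsNonCollider E y t p v ∧ v ∉ A}
  rcases hblocked B (fun v hv => ⟨hAS hv, fun h => h.2 hv⟩) Set.sdiff_subset with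
    ⟨v, hnc, hvB⟩ | ⟨c, hc, hcB, -⟩
  · exact hnone v hnc (by_contra fun hvA => hvB.2 ⟨hnc, hvA⟩)
  · exact hcB ⟨hpS c hc.1, fun h => h.1.2 hc⟩

lemma inN_of_forall_exists_nonCollider_mem (hAS : A ⊆ S)
    (h : ∀ p, IsPath E y t p → ∃ v, IsNonCollider E y t p v ∧ v ∈ A) : InN E y t S A := by
  have hdsep : ∀ B, A ⊆ B → B ⊆ S → DSep E y t S B := fun B hAB hBS =>
    ⟨hBS, fun p hp => have ⟨v, hv, hvA⟩ := h p hp; Or.inl ⟨v, hv, hAB hvA⟩⟩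
  exact ⟨hdsep A le_rfl hAS, hdsep⟩

end

theorem stmt9_general {V : Type*} (E : V → V → Prop) (y t : V) (S : Set V)
    (hcover : ∀ v, v = y ∨ v = t ∨ v ∈ S) :
    ∀ A : Set V, A ⊆ S →
      (InN E y t S A ↔
        ∀ p, IsPath E y t p → ∃ v, IsNonCollider E y t p v ∧ v ∈ A) := by
  intro A hAS
  refine ⟨fun ⟨_, hN⟩ p hp => ?_, inN_of_forall_exists_nonCollider_mem hAS⟩
  exact exists_nonCollider_mem_of_forall_blocked (fun v => hp.mem_of_mem hcover) hAS
    fun B hAB hBS => (hN B hAB hBS).2 p hp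

/-- characterization of `𝒩`: for every `A ⊆ S`, `A ∈ 𝒩` if and
only if every path between `y` and `t` contains a non-collider belonging
to `A`. -/
theorem stmt9 {V : Type*} [Fintype V] (E : V → V → Prop) (y t : V) (S : Set V)
    (hyt : y ≠ t) (hyS : y ∉ S) (htS : t ∉ S)
    (hcover : ∀ v, v = y ∨ v = t ∨ v ∈ S)
    (hacyc : Acyclic E) :
    ∀ A : Set V, A ⊆ S →
      (InN E y t S A ↔
        ∀ p, IsPath E y t p → ∃ v, IsNonCollider E y t p v ∧ v ∈ A) :=
  stmt9_general E y t S hcover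
end

section
/- Let i ∈ S be such that i is not a non-collider of any path between y and t (i.e. on every path between y and t on which i lies, i is a collider). Then for every A ⊆ S, A ∈ 𝒜 implies A \ {i} ∈ 𝒜 (claim (b) of Section 5). -/
/-- claim (b) of Section 5: if `i ∈ S` is not a non-collider of
any path between `y` and `t` (i.e. on every path on which it lies it is a
collider), then for every `A ⊆ S`, `A ∈ 𝒜` implies `A \ {i} ∈ 𝒜`. -/
theorem stmt10 {V : Type*} [Fintype V] (E : V → V → Prop) (y t : V) (S : Set V)
    (hyt : y ≠ t) (hyS : y ∉ S) (htS : t ∉ S)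
    (hcover : ∀ v, v = y ∨ v = t ∨ v ∈ S)
    (hacyc : Acyclic E)
    (i : V) (hiS : i ∈ S)
    (hi : ∀ p, IsPath E y t p → ¬ IsNonCollider E y t p i) :
    ∀ A : Set V, A ⊆ S → DSep E y t S A → DSep E y t S (A \ {i}) := by
  intro A hAS hA
  refine ⟨fun v hv => hAS hv.1, fun p hp => ?_⟩
  rcases hA.2 p hp with ⟨v, hv, hvA⟩ | ⟨c, hc, hcA, hcd⟩
  · refine Or.inl ⟨v, hv, hvA, ?_⟩
    intro hvi
    exact hi p hp (hvi ▸ hv)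
  · exact Or.inr ⟨c, hc, fun h => hcA h.1, fun d hd h => hcd d hd h.1⟩
end

section
/- Let i ∈ S be such that for every path P between y and t, i is neither a collider of P nor a descendant of a collider of P. Then for every A ⊆ S, A ∈ 𝒜 implies A ∪ {i} ∈ 𝒜 (claim (c) of Section 5). -/
/-- claim (c) of Section 5: if `i ∈ S` is, for every path `p`
between `y` and `t`, neither a collider of `p` nor a descendant of a collider of
`p`, then for every `A ⊆ S`, `A ∈ 𝒜` implies `A ∪ {i} ∈ 𝒜`. -/
theorem stmt11 {V : Type*} [Fintype V] (E : V → V → Prop) (y t : V) (S : Set V)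
    (hyt : y ≠ t) (hyS : y ∉ S) (htS : t ∉ S)
    (hcover : ∀ v, v = y ∨ v = t ∨ v ∈ S)
    (hacyc : Acyclic E)
    (i : V) (hiS : i ∈ S)
    (hi : ∀ p, IsPath E y t p →
      ¬ IsCollider E y t p i ∧ ∀ c, IsCollider E y t p c → ¬ Descendant E c i) :
    ∀ A : Set V, A ⊆ S → DSep E y t S A → DSep E y t S (A ∪ {i}) := by
  intro A hAS hA
  refine ⟨?_, ?_⟩
  · rintro v (h | h)
    · exact hAS h
    · exact h ▸ hiS
  · intro p hp
    rcases hA.2 p hp with ⟨v, hv, hvA⟩ | ⟨c, hc, hcA, hd⟩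
    · exact Or.inl ⟨v, hv, Or.inl hvA⟩
    · refine Or.inr ⟨c, hc, ?_, ?_⟩
      · rintro (h | h)
        · exact hcA h
        · exact (hi p hp).1 (h ▸ hc)
      · intro d hdd
        rintro (h | h)
        · exact hd d hdd h
        · exact (hi p hp).2 c hc (h ▸ hdd)
end

section
/- Let Σ be a positive definite real matrix indexed by a nonempty finite type n, and let A ⊆ n be nonempty. Then Σ and Σ_{A,A} are invertible and ‖(Σ_{A,A})⁻¹‖ ≤ ‖Σ⁻¹‖ in spectral norm. -/
/-!
For a positive definite `M`, `‖M⁻¹‖ ≤ c` holds exactly when `x ⬝ᵥ x ≤ c * (x ⬝ᵥ M *ᵥ x)` for all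
`x`, i.e. when `c⁻¹` bounds the Rayleigh quotient of `M` from below; for `c = ‖M⁻¹‖` this is the
bound `y ⬝ᵥ M⁻¹ *ᵥ y ≤ ‖M⁻¹‖ * (y ⬝ᵥ y)` at `y = √M x`, as `√M M⁻¹ √M = 1`. The principal submatrix
`M_{A,A}` equals `Pᵀ M P` for the isometric coordinate embedding `P`, so its Rayleigh quotients
are among those of `M` and the same `c = ‖M⁻¹‖` works for it.
-/

open scoped Matrix.Norms.L2Operator

namespace Matrix

section Compression

variable {m n R : Type*} [Fintype n] [CommSemiring R]

lemma dotProduct_transpose_mul_mul_mulVec [Fintype m] (P : Matrix n m R) (B : Matrix n n R)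
    (y : m → R) : y ⬝ᵥ (Pᵀ * B * P) *ᵥ y = (P *ᵥ y) ⬝ᵥ B *ᵥ (P *ᵥ y) := by
  rw [Matrix.mul_assoc, ← mulVec_mulVec, dotProduct_mulVec, vecMul_transpose, mulVec_mulVec]

lemma transpose_submatrix_one_mul_mul [DecidableEq n] (M : Matrix n n R) (e : m → n) :
    ((1 : Matrix n n R).submatrix id e)ᵀ * M * (1 : Matrix n n R).submatrix id e =
      M.submatrix e e := by
  ext i j
  simp [mul_apply, one_apply]

end Compression

variable {n : Type*} [Fintype n]

lemma dotProduct_self_eq_norm_sq (x : n → ℝ) : x ⬝ᵥ x = ‖WithLp.toLp 2 x‖ ^ 2 := by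
  rw [← real_inner_self_eq_norm_sq, EuclideanSpace.inner_toLp_toLp, star_trivial,
    dotProduct_comm]

variable [DecidableEq n]

lemma dotProduct_mulVec_le_l2_opNorm_mul (M : Matrix n n ℝ) (x : n → ℝ) :
    x ⬝ᵥ M *ᵥ x ≤ ‖M‖ * (x ⬝ᵥ x) := by
  set v := WithLp.toLp 2 x
  set T := toEuclideanCLM (𝕜 := ℝ) M
  calc x ⬝ᵥ M *ᵥ x = inner ℝ v (T v) := (inner_toEuclideanCLM M v v).symm
    _ ≤ ‖v‖ * ‖T v‖ := real_inner_le_norm _ _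
    _ ≤ ‖v‖ * (‖M‖ * ‖v‖) := by gcongr; exact T.le_opNorm v
    _ = ‖M‖ * (x ⬝ᵥ x) := by rw [dotProduct_self_eq_norm_sq]; ring

open scoped MatrixOrder in
lemma PosDef.dotProduct_self_le_norm_inv_mul {M : Matrix n n ℝ} (hM : M.PosDef) (x : n → ℝ) :
    x ⬝ᵥ x ≤ ‖M⁻¹‖ * (x ⬝ᵥ M *ᵥ x) := by
  set R := CFC.sqrt M
  have hR_symm : Rᵀ = R := by
    rw [← conjTranspose_eq_transpose_of_trivial]
    exact (nonneg_iff_posSemidef.mp (CFC.sqrt_nonneg M)).isHermitian.eq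
  have hR_sq : Rᵀ * R = M := by
    rw [hR_symm]
    exact CFC.sqrt_mul_sqrt_self M hM.posSemidef.nonneg
  have hR_det : IsUnit R.det :=
    (isUnit_iff_isUnit_det R).mp (isUnit_of_mul_isUnit_right (hR_sq ▸ hM.isUnit))
  have hR_inv : Rᵀ * M⁻¹ * R = 1 := by
    rw [← hR_sq, Matrix.mul_inv_rev, hR_symm, Matrix.mul_assoc, Matrix.mul_assoc,
      nonsing_inv_mul _ hR_det, Matrix.mul_one, mul_nonsing_inv _ hR_det]
  have hR_norm : (R *ᵥ x) ⬝ᵥ (R *ᵥ x) = x ⬝ᵥ M *ᵥ x := by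
    rw [← hR_sq, ← Matrix.mul_one Rᵀ, dotProduct_transpose_mul_mul_mulVec, one_mulVec]
  calc x ⬝ᵥ x = (R *ᵥ x) ⬝ᵥ M⁻¹ *ᵥ (R *ᵥ x) := by
        rw [← dotProduct_transpose_mul_mul_mulVec, hR_inv, one_mulVec]
    _ ≤ ‖M⁻¹‖ * ((R *ᵥ x) ⬝ᵥ (R *ᵥ x)) := dotProduct_mulVec_le_l2_opNorm_mul _ _
    _ = ‖M⁻¹‖ * (x ⬝ᵥ M *ᵥ x) := by rw [hR_norm]

lemma norm_inv_le_of_dotProduct_self_le {M : Matrix n n ℝ} (hM : IsUnit M) {c : ℝ} (hc : 0 ≤ c)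
    (h : ∀ x, x ⬝ᵥ x ≤ c * (x ⬝ᵥ M *ᵥ x)) : ‖M⁻¹‖ ≤ c := by
  refine (toEuclideanCLM (𝕜 := ℝ) M⁻¹).opNorm_le_bound hc fun v => ?_
  set w := toEuclideanCLM (𝕜 := ℝ) M⁻¹ v
  have hMw : toEuclideanCLM (𝕜 := ℝ) M w = v := by
    rw [← mul_apply_eq_comp, ← map_mul, mul_nonsing_inv _ ((isUnit_iff_isUnit_det M).mp hM),
      map_one, one_apply_eq_self]
  have hw : ‖w‖ * ‖w‖ ≤ c * ‖v‖ * ‖w‖ :=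
    calc ‖w‖ * ‖w‖ = w.ofLp ⬝ᵥ w.ofLp := by rw [dotProduct_self_eq_norm_sq, WithLp.toLp_ofLp, sq]
      _ ≤ c * (w.ofLp ⬝ᵥ M *ᵥ w.ofLp) := h _
      _ = c * inner ℝ w v := by rw [← inner_toEuclideanCLM, hMw]
      _ ≤ c * ‖v‖ * ‖w‖ := by
        rw [mul_assoc, mul_comm ‖v‖]
        gcongr
        exact real_inner_le_norm _ _
  rcases (norm_nonneg w).eq_or_lt with hw0 | hw0
  · rw [← hw0]
    positivity
  · exact le_of_mul_le_mul_right hw hw0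

lemma PosDef.norm_inv_submatrix_le {m : Type*} [Fintype m] [DecidableEq m] {M : Matrix n n ℝ}
    (hM : M.PosDef) {e : m → n} (he : Function.Injective e) :
    ‖(M.submatrix e e)⁻¹‖ ≤ ‖M⁻¹‖ := by
  set P := (1 : Matrix n n ℝ).submatrix id e
  refine norm_inv_le_of_dotProduct_self_le (hM.submatrix he).isUnit (norm_nonneg _) fun y => ?_
  calc y ⬝ᵥ y = y ⬝ᵥ (Pᵀ * (1 : Matrix n n ℝ) * P) *ᵥ y := by
        rw [transpose_submatrix_one_mul_mul, submatrix_one e he, one_mulVec]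
    _ = (P *ᵥ y) ⬝ᵥ (P *ᵥ y) := by rw [dotProduct_transpose_mul_mul_mulVec, one_mulVec]
    _ ≤ ‖M⁻¹‖ * ((P *ᵥ y) ⬝ᵥ M *ᵥ (P *ᵥ y)) := hM.dotProduct_self_le_norm_inv_mul _
    _ = ‖M⁻¹‖ * (y ⬝ᵥ M.submatrix e e *ᵥ y) := by
        rw [← dotProduct_transpose_mul_mul_mulVec, transpose_submatrix_one_mul_mul]

end Matrix

theorem stmt13_general {n : Type*} [Fintype n] [DecidableEq n]
    (Sig : Matrix n n ℝ) (hSig : Sig.PosDef)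
    (A : Finset n) :
    IsUnit Sig ∧
    IsUnit (Sig.submatrix (Subtype.val : A → n) (Subtype.val : A → n)) ∧
    ‖(Sig.submatrix (Subtype.val : A → n) (Subtype.val : A → n))⁻¹‖ ≤ ‖Sig⁻¹‖ :=
  ⟨hSig.isUnit, (hSig.submatrix Subtype.val_injective).isUnit,
    hSig.norm_inv_submatrix_le Subtype.val_injective⟩

/-- for a positive definite real matrix `Sig` indexed by a nonempty
finite type `n` and a nonempty subset `A ⊆ n`, both `Sig` and the principal
submatrix `Sig_{A,A}` are invertible, and `‖(Sig_{A,A})⁻¹‖ ≤ ‖Sig⁻¹‖` in spectral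
norm. -/
theorem stmt13 {n : Type*} [Fintype n] [Nonempty n] [DecidableEq n]
    (Sig : Matrix n n ℝ) (hSig : Sig.PosDef)
    (A : Finset n) (hA : A.Nonempty) :
    IsUnit Sig ∧
    IsUnit (Sig.submatrix (Subtype.val : A → n) (Subtype.val : A → n)) ∧
    ‖(Sig.submatrix (Subtype.val : A → n) (Subtype.val : A → n))⁻¹‖ ≤ ‖Sig⁻¹‖ :=
  stmt13_general Sig hSig A
end

section
/- There exists n₀ such that for every n ≥ n₀ the following holds: for every enumeration a₁, ..., a_N of 𝔽 with f̂_n(a₁) ≥ f̂_n(a₂) ≥ ... ≥ f̂_n(a_N), defining the ridge ratio R(0) = c₀ and R(k) = (f̂_n(a_{k+1}) + c_n)/(f̂_n(a_k) + c_n) for 1 ≤ k ≤ N − 1, every minimizer τ ∈ {0, 1, ..., N − 1} of R satisfies {a_k : τ < k ≤ N} = Z (deterministic selection consistency of the ridge-ratio method, the core of Theorem 2). -/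
open Filter Finset

private lemma fin_initseg {N : ℕ} (S : Finset (Fin N))
    (hdc : ∀ j l : Fin N, j ≤ l → l ∈ S → j ∈ S) (j : Fin N) :
    j ∈ S ↔ j.val < S.card := by
  constructor
  · intro hj
    have hsub : Finset.Iic j ⊆ S := fun l hl => hdc l j (Finset.mem_Iic.mp hl) hj
    have := Finset.card_le_card hsub
    rw [Fin.card_Iic] at this
    omega
  · intro hj
    by_contra hjS
    have hsub : S ⊆ Finset.Iio j := by
      intro l hl
      rw [Finset.mem_Iio]
      rcases lt_or_ge l j with h | h
      · exact h
      · exact absurd (hdc j l h hl) hjS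
    have := Finset.card_le_card hsub
    rw [Fin.card_Iio] at this
    omega

/-- deterministic selection consistency of the ridge-ratio method,
the core of Theorem 2: `F` is a nonempty finite set with `N` elements,
`f : F → ℝ` is nonnegative with nonempty zero set `Z`, `fhat n` approximates `f`
uniformly within `ε n`, where `ε n → 0`, `c n → 0` and `ε n / c n → 0`.  Then
there is `n₀` such that for all `n ≥ n₀` and every enumeration
`a 0, …, a (N-1)` of `F` ordered so that `fhat n (a 0) ≥ ⋯ ≥ fhat n (a (N-1))`,
every minimizer `τ ∈ {0, …, N-1}` of the ridge ratio `R` (with `R 0 = c₀` and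
`R k = (fhat n (a k) + c n) / (fhat n (a (k-1)) + c n)` for `k ≥ 1`, in 0-based
indexing) satisfies `{a j : τ ≤ j ≤ N-1} = Z`. -/
theorem stmt15 {F : Type*} [Fintype F] [Nonempty F]
    (f : F → ℝ) (hf : ∀ a, 0 ≤ f a)
    (hZ : ∃ a, f a = 0)
    (fhat : ℕ → F → ℝ) (hfhat : ∀ n a, 0 ≤ fhat n a)
    (ε c : ℕ → ℝ) (hε : ∀ n, 0 < ε n) (hc : ∀ n, 0 < c n)
    (hbound : ∀ n a, |fhat n a - f a| ≤ ε n)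
    (hε0 : Filter.Tendsto ε Filter.atTop (nhds 0))
    (hc0 : Filter.Tendsto c Filter.atTop (nhds 0))
    (hεc : Filter.Tendsto (fun n => ε n / c n) Filter.atTop (nhds 0))
    (c₀ : ℝ) (hc₀ : c₀ ∈ Set.Ioo (0 : ℝ) 1) :
    ∃ n₀ : ℕ, ∀ n ≥ n₀,
      ∀ a : Fin (Fintype.card F) → F, Function.Bijective a →
        (∀ k l : Fin (Fintype.card F), k ≤ l → fhat n (a l) ≤ fhat n (a k)) →
        ∀ τ : Fin (Fintype.card F),
          (∀ k : Fin (Fintype.card F),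
            (if τ.val = 0 then c₀ else
              (fhat n (a τ) + c n) /
                (fhat n (a ⟨τ.val - 1, lt_of_le_of_lt (Nat.sub_le _ _) τ.isLt⟩) + c n))
            ≤
            (if k.val = 0 then c₀ else
              (fhat n (a k) + c n) /
                (fhat n (a ⟨k.val - 1, lt_of_le_of_lt (Nat.sub_le _ _) k.isLt⟩) + c n))) →
          {x | ∃ j : Fin (Fintype.card F), τ.val ≤ j.val ∧ a j = x}
            = {x | f x = 0} := by
  obtain ⟨hc₀0, hc₀1⟩ := hc₀
  have hN : 0 < Fintype.card F := Fintype.card_pos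
  have hub : ∀ n x, fhat n x ≤ f x + ε n := by
    intro n x
    have := (abs_le.mp (hbound n x)).2
    linarith
  have hlb : ∀ n x, f x - ε n ≤ fhat n x := by
    intro n x
    have := (abs_le.mp (hbound n x)).1
    linarith
  by_cases hall : ∀ x, f x = 0
  · -- Case A : f is identically zero
    have hkey : ∀ᶠ n in atTop, ε n / c n < (1 - c₀) / c₀ :=
      hεc.eventually_lt_const (div_pos (by linarith) hc₀0)
    obtain ⟨n₀, hn₀⟩ := eventually_atTop.mp hkey
    refine ⟨n₀, fun n hn a hbij hsort τ hτ => ?_⟩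
    have hεn : ∀ x, fhat n x ≤ ε n := by
      intro x
      have := hub n x
      rw [hall x] at this
      linarith
    have hτ0 : τ.val = 0 := by
      by_contra ht
      have h0 := hτ ⟨0, hN⟩
      rw [if_neg ht, if_pos rfl] at h0
      -- the ratio is ≥ c n / (ε n + c n) > c₀
      have hden : (0:ℝ) < fhat n (a ⟨τ.val - 1, lt_of_le_of_lt (Nat.sub_le _ _) τ.isLt⟩) + c n := by
        have := hfhat n (a ⟨τ.val - 1, lt_of_le_of_lt (Nat.sub_le _ _) τ.isLt⟩)
        have := hc n
        linarith
      have h1 : c n / (ε n + c n) ≤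
          (fhat n (a τ) + c n) /
            (fhat n (a ⟨τ.val - 1, lt_of_le_of_lt (Nat.sub_le _ _) τ.isLt⟩) + c n) := by
        apply div_le_div₀ (by have := hfhat n (a τ); have := hc n; linarith)
          (by have := hfhat n (a τ); linarith) hden
        have := hεn (a ⟨τ.val - 1, lt_of_le_of_lt (Nat.sub_le _ _) τ.isLt⟩)
        linarith
      have h2 : c₀ < c n / (ε n + c n) := by
        have hcn := hc n
        have hεn' := hε n
        have h3 : ε n * c₀ < (1 - c₀) * c n := by
          have := hn₀ n hn
          rw [div_lt_div_iff₀ hcn hc₀0] at this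
          linarith
        rw [lt_div_iff₀ (by linarith)]
        nlinarith
      linarith
    ext x
    simp only [Set.mem_setOf_eq]
    constructor
    · intro _
      exact hall x
    · intro _
      exact ⟨(Equiv.ofBijective a hbij).symm x, by omega,
        (Equiv.ofBijective a hbij).apply_symm_apply x⟩
  · -- Case B : f has a nonzero value
    push_neg at hall
    obtain ⟨x₀, hx₀⟩ := hall
    have hTne : (Finset.univ.filter (fun x => f x ≠ 0)).Nonempty :=
      ⟨x₀, by simp [hx₀]⟩
    set m : ℝ := (Finset.univ.filter (fun x => f x ≠ 0)).inf' hTne f with hm_def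
    have hmle : ∀ x, f x ≠ 0 → m ≤ f x := fun x hx =>
      Finset.inf'_le f (by simp [hx])
    have hm : 0 < m := by
      rw [hm_def, Finset.lt_inf'_iff]
      intro b hb
      simp only [Finset.mem_filter] at hb
      exact lt_of_le_of_ne (hf b) (Ne.symm hb.2)
    set M : ℝ := Finset.univ.sup' Finset.univ_nonempty f with hM_def
    have hM : ∀ x, f x ≤ M := fun x => Finset.le_sup' f (Finset.mem_univ x)
    have hM0 : 0 ≤ M := le_trans (hf x₀) (hM x₀)
    set δ₀ : ℝ := (m / 2) / (M + m + 1) with hδ₀_def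
    have hδ₀ : 0 < δ₀ := by positivity
    set κ : ℝ := min c₀ (min δ₀ (1/2)) with hκ_def
    have hκ : 0 < κ := by
      apply lt_min hc₀0
      apply lt_min hδ₀
      norm_num
    have hA : ∀ᶠ n in atTop, ε n < m / 4 := hε0.eventually_lt_const (by positivity)
    have hB : ∀ᶠ n in atTop, ε n / c n < 1 := hεc.eventually_lt_const one_pos
    have hC : ∀ᶠ n in atTop, c n < 1 := hc0.eventually_lt_const one_pos
    have hD : ∀ᶠ n in atTop, ε n + c n < (m / 2) * κ := by
      have : Filter.Tendsto (fun n => ε n + c n) atTop (nhds 0) := by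
        simpa using hε0.add hc0
      exact this.eventually_lt_const (by positivity)
    obtain ⟨n₀, hn₀⟩ := eventually_atTop.mp (((hA.and hB).and (hC.and hD)))
    refine ⟨n₀, fun n hn a hbij hsort τ hτ => ?_⟩
    obtain ⟨⟨h1, h2⟩, h3, h4⟩ := hn₀ n hn
    have hεc' : ε n < c n := by
      have := (div_lt_one (hc n)).mp h2
      exact this
    -- upper/lower estimates at zero/nonzero points
    have hzub : ∀ x, f x = 0 → fhat n x ≤ ε n := by
      intro x hx
      have := hub n x
      rw [hx] at this
      linarith
    have hnlb : ∀ x, f x ≠ 0 → m - ε n ≤ fhat n x := by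
      intro x hx
      have := hlb n x
      have := hmle x hx
      linarith
    -- the set of positions carrying nonzero points is an initial segment
    set S : Finset (Fin (Fintype.card F)) :=
      Finset.univ.filter (fun j => f (a j) ≠ 0) with hS_def
    set p : ℕ := S.card with hp_def
    have hdc : ∀ j l : Fin (Fintype.card F), j ≤ l → l ∈ S → j ∈ S := by
      intro j l hjl hl
      simp only [hS_def, Finset.mem_filter, Finset.mem_univ, true_and] at hl ⊢
      intro hj0
      have hs := hsort j l hjl
      have e1 := hzub (a j) hj0
      have e2 := hnlb (a l) hl
      linarith
    have hseg : ∀ j : Fin (Fintype.card F), f (a j) = 0 ↔ p ≤ j.val := by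
      intro j
      have := fin_initseg S hdc j
      simp only [hS_def, Finset.mem_filter, Finset.mem_univ, true_and] at this
      rw [← hp_def] at this
      constructor
      · intro h
        by_contra hcon
        exact (this.mpr (by omega)) h
      · intro h
        by_contra hcon
        have := this.mp hcon
        omega
    have hp1 : 1 ≤ p := by
      set j₀ := (Equiv.ofBijective a hbij).symm x₀ with hj₀
      have haj₀ : a j₀ = x₀ := (Equiv.ofBijective a hbij).apply_symm_apply x₀
      have : ¬ (p ≤ j₀.val) := fun h => hx₀ (haj₀ ▸ (hseg j₀).mpr h)
      omega
    have hpN : p < Fintype.card F := by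
      obtain ⟨z₀, hz₀⟩ := hZ
      set jz := (Equiv.ofBijective a hbij).symm z₀ with hjz
      have hajz : a jz = z₀ := (Equiv.ofBijective a hbij).apply_symm_apply z₀
      have := (hseg jz).mp (by rw [hajz]; exact hz₀)
      have := jz.isLt
      omega
    set pf : Fin (Fintype.card F) := ⟨p, hpN⟩ with hpf
    have hpne : pf.val ≠ 0 := by simp [hpf]; omega
    -- bound on R(pf)
    have hfp0 : f (a pf) = 0 := (hseg pf).mpr (le_refl p)
    have hfp1 : f (a ⟨pf.val - 1, lt_of_le_of_lt (Nat.sub_le _ _) pf.isLt⟩) ≠ 0 := by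
      intro h
      have := (hseg _).mp h
      simp only [hpf] at this
      omega
    have hRp : (fhat n (a pf) + c n) /
        (fhat n (a ⟨pf.val - 1, lt_of_le_of_lt (Nat.sub_le _ _) pf.isLt⟩) + c n)
        ≤ (ε n + c n) / (m / 2) := by
      apply div_le_div₀ (by have := hε n; have := hc n; linarith)
        (by have := hzub _ hfp0; linarith) (by positivity)
      have := hnlb _ hfp1
      have := hc n
      linarith
    have hRpκ : (fhat n (a pf) + c n) /
        (fhat n (a ⟨pf.val - 1, lt_of_le_of_lt (Nat.sub_le _ _) pf.isLt⟩) + c n) < κ := by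
      have : (ε n + c n) / (m / 2) < κ := by
        rw [div_lt_iff₀ (by positivity)]
        linarith
      linarith
    have hτle := hτ pf
    rw [if_neg hpne] at hτle
    -- show τ.val = p
    have hτp : τ.val = p := by
      rcases Nat.lt_trichotomy τ.val p with h | h | h
      · by_cases ht0 : τ.val = 0
        · rw [if_pos ht0] at hτle
          have : c₀ < κ := lt_of_le_of_lt hτle hRpκ
          have : κ ≤ c₀ := min_le_left _ _
          linarith
        · exfalso
          rw [if_neg ht0] at hτle
          -- middle case : both indices < p, ratio ≥ δ₀
          have hi1 : f (a τ) ≠ 0 := by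
            intro hcon
            have := (hseg τ).mp hcon
            omega
          have hi2 : f (a ⟨τ.val - 1, lt_of_le_of_lt (Nat.sub_le _ _) τ.isLt⟩) ≠ 0 := by
            intro hcon
            have := (hseg _).mp hcon
            simp only at this
            omega
          have hlow : δ₀ ≤ (fhat n (a τ) + c n) /
              (fhat n (a ⟨τ.val - 1, lt_of_le_of_lt (Nat.sub_le _ _) τ.isLt⟩) + c n) := by
            rw [hδ₀_def]
            apply div_le_div₀ (by have := hnlb _ hi1; have := hc n; linarith)
              (by have := hnlb _ hi1; have := hc n; linarith)
              (by have := hfhat n (a ⟨τ.val - 1, lt_of_le_of_lt (Nat.sub_le _ _) τ.isLt⟩); have := hc n; linarith)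
            have := hub n (a ⟨τ.val - 1, lt_of_le_of_lt (Nat.sub_le _ _) τ.isLt⟩)
            have := hM (a ⟨τ.val - 1, lt_of_le_of_lt (Nat.sub_le _ _) τ.isLt⟩)
            linarith
          have hκδ : κ ≤ δ₀ := le_trans (min_le_right _ _) (min_le_left _ _)
          linarith
      · exact h
      · exfalso
        have ht0 : τ.val ≠ 0 := by omega
        rw [if_neg ht0] at hτle
        -- tail case : both indices ≥ p, ratio ≥ 1/2
        have hi1 : f (a τ) = 0 := (hseg τ).mpr (by omega)
        have hi2 : f (a ⟨τ.val - 1, lt_of_le_of_lt (Nat.sub_le _ _) τ.isLt⟩) = 0 :=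
          (hseg _).mpr (by simp only; omega)
        have hlow : (1:ℝ)/2 ≤ (fhat n (a τ) + c n) /
            (fhat n (a ⟨τ.val - 1, lt_of_le_of_lt (Nat.sub_le _ _) τ.isLt⟩) + c n) := by
          have hstep : c n / (ε n + c n) ≤ (fhat n (a τ) + c n) /
              (fhat n (a ⟨τ.val - 1, lt_of_le_of_lt (Nat.sub_le _ _) τ.isLt⟩) + c n) := by
            apply div_le_div₀ (by have := hfhat n (a τ); have := hc n; linarith)
              (by have := hfhat n (a τ); linarith)
              (by have := hfhat n (a ⟨τ.val - 1, lt_of_le_of_lt (Nat.sub_le _ _) τ.isLt⟩); have := hc n; linarith)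
            have := hzub _ hi2
            linarith
          have h12 : (1:ℝ)/2 ≤ c n / (ε n + c n) := by
            rw [div_le_div_iff₀ (by norm_num) (by have := hε n; have := hc n; linarith)]
            linarith
          linarith
        have hκ2 : κ ≤ 1/2 := le_trans (min_le_right _ _) (min_le_right _ _)
        linarith
    -- conclude the set equality
    ext x
    simp only [Set.mem_setOf_eq]
    constructor
    · rintro ⟨j, hj, rfl⟩
      exact (hseg j).mpr (by omega)
    · intro hx
      refine ⟨(Equiv.ofBijective a hbij).symm x, ?_,
        (Equiv.ofBijective a hbij).apply_symm_apply x⟩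
      rw [hτp]
      apply (hseg _).mp
      have hax : a ((Equiv.ofBijective a hbij).symm x) = x :=
        (Equiv.ofBijective a hbij).apply_symm_apply x
      rw [hax]
      exact hx
end

section
/- (Equivalence property (14) of the paper, abstract form) Let U, V, Z be measurable maps from Ω into standard Borel spaces and let T : Ω → {0,1} be measurable. Assume U ⊥⊥ T | σ(V, Z) and that the conditional probability satisfies 0 < E[T | σ(V, Z)] < 1 μ-almost surely (the overlap/common-support condition). Then U ⊥⊥ V | σ(Z) if and only if U ⊥⊥ V | σ(Z, T). -/
/-!
Conditional independence `f ⊥⊥ g | 𝓜` is equivalent to the tower identity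
`E[1_{f ∈ s} | 𝓜 ⊔ σ(g)] = E[1_{f ∈ s} | 𝓜]` for all measurable `s`; write `X = 1_{U ∈ s}`.
By `U ⊥⊥ T | σ(V, Z)`, conditioning `X` on `σ(V, Z, T)` gives `G := E[X | σ(V, Z)]`, and both
sides of the equivalence say that a conditional expectation on a finer σ-algebra is already
measurable for a coarser one.

If `G = E[X | σ(Z)]`, then `G` is `σ(Z, T)`-measurable, so `E[X | σ(Z, T)] = G` as well.
Conversely, if `G = E[X | σ(Z, T)] = H(Z, T)`, then `G T = H(Z, 1) T` because `T ∈ {0, 1}`;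
conditioning on `σ(V, Z)` gives `G · E[T | σ(V, Z)] = H(Z, 1) · E[T | σ(V, Z)]`, and the overlap
condition `E[T | σ(V, Z)] > 0` cancels the factor, so `G = H(Z, 1)` is `σ(Z)`-measurable.
-/

open MeasureTheory ProbabilityTheory MeasurableSpace Set

section PiSystem

variable {Ω : Type*}

lemma isPiSystem_image2_inter (m₁ m₂ : MeasurableSpace Ω) :
    IsPiSystem (image2 (· ∩ ·) {s | MeasurableSet[m₁] s} {t | MeasurableSet[m₂] t}) := by
  rintro _ ⟨s₁, hs₁, t₁, ht₁, rfl⟩ _ ⟨s₂, hs₂, t₂, ht₂, rfl⟩ -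
  exact ⟨s₁ ∩ s₂, hs₁.inter hs₂, t₁ ∩ t₂, ht₁.inter ht₂, inter_inter_inter_comm _ _ _ _⟩

lemma generateFrom_image2_inter (m₁ m₂ : MeasurableSpace Ω) :
    generateFrom (image2 (· ∩ ·) {s | MeasurableSet[m₁] s} {t | MeasurableSet[m₂] t}) =
      m₁ ⊔ m₂ := by
  refine le_antisymm (generateFrom_le ?_) (sup_le (fun s hs ↦ ?_) fun t ht ↦ ?_)
  · rintro _ ⟨s, hs, t, ht, rfl⟩
    exact (le_sup_left (b := m₂) s hs).inter (le_sup_right (a := m₁) t ht)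
  · exact measurableSet_generateFrom ⟨s, hs, univ, .univ, inter_univ s⟩
  · exact measurableSet_generateFrom ⟨univ, .univ, t, ht, univ_inter t⟩

variable {mΩ : MeasurableSpace Ω} {μ : Measure Ω} {E : Type*} [NormedAddCommGroup E]
  [NormedSpace ℝ E]

theorem setIntegral_eq_of_isPiSystem {m : MeasurableSpace Ω} (hm : m ≤ mΩ) {C : Set (Set Ω)}
    (hgen : m = generateFrom C) (hC : IsPiSystem C) {f g : Ω → E} (hf : Integrable f μ)
    (hg : Integrable g μ) (huniv : ∫ x, f x ∂μ = ∫ x, g x ∂μ)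
    (hbasic : ∀ s ∈ C, ∫ x in s, f x ∂μ = ∫ x in s, g x ∂μ) {s : Set Ω}
    (hs : MeasurableSet[m] s) : ∫ x in s, f x ∂μ = ∫ x in s, g x ∂μ := by
  induction s, hs using induction_on_inter hgen hC with
  | empty => simp
  | basic t ht => exact hbasic t ht
  | compl t ht iht =>
    rw [← add_right_inj (∫ x in t, f x ∂μ), integral_add_compl (hm t ht) hf, iht,
      integral_add_compl (hm t ht) hg, huniv]
  | iUnion t htd ht iht =>
    rw [integral_iUnion (fun i ↦ hm _ (ht i)) htd hf.integrableOn,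
      integral_iUnion (fun i ↦ hm _ (ht i)) htd hg.integrableOn]
    exact tsum_congr iht

end PiSystem

section CondExp

variable {Ω : Type*} {m m₁ m₂ mΩ : MeasurableSpace Ω} {μ : Measure Ω} [IsFiniteMeasure μ]

theorem condExp_ae_eq_condExp_of_aestronglyMeasurable {f : Ω → ℝ} (hm₁₂ : m₁ ≤ m₂)
    (hm₂ : m₂ ≤ mΩ) (hf : AEStronglyMeasurable[m₁] (μ[f | m₂]) μ) :
    μ[f | m₁] =ᵐ[μ] μ[f | m₂] :=
  (condExp_condExp_of_le hm₁₂ hm₂).symm.trans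
    (condExp_of_aestronglyMeasurable' (hm₁₂.trans hm₂) hf integrable_condExp)

theorem condExp_inter_ae_eq_mul_of_condExp_sup_ae_eq (hm₁ : m₁ ≤ mΩ) (hm₂ : m₂ ≤ mΩ)
    {A B : Set Ω} (hA : MeasurableSet A) (hB : MeasurableSet[m₂] B)
    (h : μ⟦A | m₁ ⊔ m₂⟧ =ᵐ[μ] μ⟦A | m₁⟧) :
    μ⟦A ∩ B | m₁⟧ =ᵐ[μ] μ⟦A | m₁⟧ * μ⟦B | m₁⟧ := by
  have hB' : MeasurableSet[m₁ ⊔ m₂] B := le_sup_right (a := m₁) B hB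
  have hsplit : (A ∩ B).indicator (fun _ ↦ (1 : ℝ)) =
      B.indicator (fun _ ↦ 1) * A.indicator (fun _ ↦ 1) := by
    rw [inter_comm]; exact inter_indicator_one
  calc μ⟦A ∩ B | m₁⟧
      =ᵐ[μ] μ[μ[B.indicator (fun _ ↦ 1) * A.indicator (fun _ ↦ 1) | m₁ ⊔ m₂] | m₁] := by
        rw [← hsplit]; exact (condExp_condExp_of_le le_sup_left (sup_le hm₁ hm₂)).symm
    _ =ᵐ[μ] μ[B.indicator (fun _ ↦ 1) * μ⟦A | m₁⟧ | m₁] := by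
        refine condExp_congr_ae <| (condExp_mul_of_stronglyMeasurable_left
          (stronglyMeasurable_const.indicator hB') ?_ ((integrable_const 1).indicator hA)).trans
          h.mul_left
        rw [← hsplit]; exact (integrable_const 1).indicator (hA.inter (hm₂ _ hB))
    _ =ᵐ[μ] μ⟦A | m₁⟧ * μ⟦B | m₁⟧ := by
        rw [mul_comm]
        exact condExp_mul_of_stronglyMeasurable_left stronglyMeasurable_condExp
          (integrable_condExp.mul_bdd (c := 1) (aestronglyMeasurable_const.indicator (hm₂ _ hB))
            (.of_forall fun _ ↦ (norm_indicator_le_norm_self _ _).trans_eq norm_one))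
          ((integrable_const 1).indicator (hm₂ _ hB))

theorem condExp_sup_ae_eq_of_forall_condExp_inter_ae_eq_mul (hm₁ : m₁ ≤ mΩ) (hm₂ : m₂ ≤ mΩ)
    {A : Set Ω} (hA : MeasurableSet A)
    (h : ∀ B, MeasurableSet[m₂] B → μ⟦A ∩ B | m₁⟧ =ᵐ[μ] μ⟦A | m₁⟧ * μ⟦B | m₁⟧) :
    μ⟦A | m₁ ⊔ m₂⟧ =ᵐ[μ] μ⟦A | m₁⟧ := by
  set ρ := μ⟦A | m₁⟧
  have hρB (B : Set Ω) : B.indicator ρ = ρ * B.indicator fun _ ↦ 1 := by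
    ext x; by_cases hx : x ∈ B <;> simp [hx]
  have hbasic : ∀ S ∈ image2 (· ∩ ·) {s | MeasurableSet[m₁] s} {t | MeasurableSet[m₂] t},
      ∫ x in S, ρ x ∂μ = ∫ x in S, A.indicator (fun _ ↦ (1 : ℝ)) x ∂μ := by
    rintro _ ⟨C, hC, B, hB, rfl⟩
    have hBi : Integrable (ρ * B.indicator fun _ ↦ (1 : ℝ)) μ := by
      rw [← hρB B]; exact integrable_condExp.indicator (hm₂ _ hB)
    calc ∫ x in C ∩ B, ρ x ∂μ
        = ∫ x in C, (ρ * B.indicator fun _ ↦ (1 : ℝ)) x ∂μ := by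
          rw [← hρB B, setIntegral_indicator (hm₂ _ hB)]
      _ = ∫ x in C, (μ[ρ * B.indicator fun _ ↦ (1 : ℝ) | m₁]) x ∂μ :=
          (setIntegral_condExp hm₁ hBi hC).symm
      _ = ∫ x in C, (μ⟦A ∩ B | m₁⟧) x ∂μ := by
          refine setIntegral_congr_ae (hm₁ _ hC) ?_
          exact ((condExp_mul_of_stronglyMeasurable_left stronglyMeasurable_condExp hBi
            ((integrable_const 1).indicator (hm₂ _ hB))).trans (h B hB).symm).mono
            fun _ hx _ ↦ hx
      _ = ∫ x in C ∩ B, A.indicator (fun _ ↦ (1 : ℝ)) x ∂μ := by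
          rw [setIntegral_condExp hm₁ ((integrable_const 1).indicator (hA.inter (hm₂ _ hB))) hC,
            ← setIntegral_indicator (hm₂ _ hB), indicator_indicator, inter_comm]
  symm
  refine ae_eq_condExp_of_forall_setIntegral_eq (sup_le hm₁ hm₂)
    ((integrable_const 1).indicator hA) (fun _ _ _ ↦ integrable_condExp.integrableOn)
    (fun S hS _ ↦ ?_)
    (stronglyMeasurable_condExp.mono (le_sup_left : m₁ ≤ m₁ ⊔ m₂)).aestronglyMeasurable
  exact setIntegral_eq_of_isPiSystem (sup_le hm₁ hm₂) (generateFrom_image2_inter m₁ m₂).symm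
    (isPiSystem_image2_inter m₁ m₂) integrable_condExp ((integrable_const 1).indicator hA)
    (integral_condExp hm₁) hbasic hS

end CondExp

section PullOut

variable {Ω : Type*} {m mΩ : MeasurableSpace Ω} {μ : Measure Ω}

theorem ae_eq_of_mul_ae_eq_of_condExp_ne_zero {f g T : Ω → ℝ}
    (hf : AEStronglyMeasurable[m] f μ) (hg : AEStronglyMeasurable[m] g μ) (hT : Integrable T μ)
    (hfT : Integrable (f * T) μ) (hfgT : f * T =ᵐ[μ] g * T)
    (hT_ne : ∀ᵐ ω ∂μ, μ[T | m] ω ≠ 0) : f =ᵐ[μ] g := by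
  have hpull : f * μ[T | m] =ᵐ[μ] g * μ[T | m] :=
    (condExp_mul_of_aestronglyMeasurable_left hf hfT hT).symm.trans <|
      (condExp_congr_ae hfgT).trans <|
        condExp_mul_of_aestronglyMeasurable_left hg ((integrable_congr hfgT).mp hfT) hT
  filter_upwards [hpull, hT_ne] with ω hω hne
  exact mul_right_cancel₀ hne hω

end PullOut

section CondIndep

variable {Ω β β' : Type*} {m mΩ : MeasurableSpace Ω} [StandardBorelSpace Ω] {μ : Measure Ω}
  [IsFiniteMeasure μ] {mβ : MeasurableSpace β} {mβ' : MeasurableSpace β'} {f : Ω → β} {g : Ω → β'}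

theorem condIndepFun_iff_condExp_sup_comap_ae_eq (hm : m ≤ mΩ) (hf : Measurable f)
    (hg : Measurable g) :
    CondIndepFun m hm f g μ ↔
      ∀ s, MeasurableSet s → μ⟦f ⁻¹' s | m ⊔ mβ'.comap g⟧ =ᵐ[μ] μ⟦f ⁻¹' s | m⟧ := by
  rw [condIndepFun_iff_condExp_inter_preimage_eq_mul hf hg]
  refine ⟨fun h s hs ↦ ?_, fun h s t hs ht ↦ ?_⟩
  · refine condExp_sup_ae_eq_of_forall_condExp_inter_ae_eq_mul hm hg.comap_le (hf hs) ?_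
    rintro _ ⟨t, ht, rfl⟩
    exact h s t hs ht
  · exact condExp_inter_ae_eq_mul_of_condExp_sup_ae_eq hm hg.comap_le (hf hs) ⟨t, ht, rfl⟩
      (h s hs)

end CondIndep

section Overlap

variable {Ω γ : Type*} {m mΩ : MeasurableSpace Ω} {μ : Measure Ω} [IsFiniteMeasure μ]
  [MeasurableSpace γ] {Z : Ω → γ} {T : Ω → ℝ}

theorem StronglyMeasurable.exists_comap_mul_eq_mul (hT01 : ∀ ω, T ω = 0 ∨ T ω = 1) {G : Ω → ℝ}
    (hG : StronglyMeasurable[MeasurableSpace.comap (fun ω ↦ (Z ω, T ω)) inferInstance] G) :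
    ∃ h : Ω → ℝ, StronglyMeasurable[MeasurableSpace.comap Z inferInstance] h ∧ G * T = h * T := by
  obtain ⟨H, hH, rfl⟩ := hG.exists_eq_measurable_comp
  refine ⟨fun ω ↦ H (Z ω, 1), hH.comp_measurable ((comap_measurable Z).prodMk measurable_const),
    funext fun ω ↦ ?_⟩
  rcases hT01 ω with hω | hω <;> simp [hω]

theorem AEStronglyMeasurable.comap_of_comap_prodMk
    (hZ : MeasurableSpace.comap Z inferInstance ≤ m)
    (hT : Measurable T) (hT01 : ∀ ω, T ω = 0 ∨ T ω = 1) (hT_ne : ∀ᵐ ω ∂μ, μ[T | m] ω ≠ 0)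
    {G : Ω → ℝ} (hGm : AEStronglyMeasurable[m] G μ) (hGi : Integrable G μ)
    (hGZT : AEStronglyMeasurable[MeasurableSpace.comap (fun ω ↦ (Z ω, T ω)) inferInstance] G μ) :
    AEStronglyMeasurable[MeasurableSpace.comap Z inferInstance] G μ := by
  obtain ⟨h, hh, hGh⟩ :=
    StronglyMeasurable.exists_comap_mul_eq_mul hT01 hGZT.stronglyMeasurable_mk
  have hT_le : ∀ ω, ‖T ω‖ ≤ 1 := fun ω ↦ by rcases hT01 ω with hω | hω <;> simp [hω]
  have hTi : Integrable T μ :=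
    (integrable_const 1).mono' hT.aestronglyMeasurable (.of_forall hT_le)
  have hGT : G * T =ᵐ[μ] h * T := hGZT.ae_eq_mk.mul_right.trans (.of_forall (congrFun hGh))
  refine hh.aestronglyMeasurable.congr (ae_eq_of_mul_ae_eq_of_condExp_ne_zero
    (hh.mono hZ).aestronglyMeasurable hGm hTi ?_ hGT.symm hT_ne)
  exact (integrable_congr hGT).mp (hGi.mul_bdd hT.aestronglyMeasurable (.of_forall hT_le))

end Overlap

theorem stmt18_general {Ω : Type*} [MeasurableSpace Ω] [StandardBorelSpace Ω]
    (μ : Measure Ω) [IsProbabilityMeasure μ]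
    {α β γ : Type*}
    [MeasurableSpace α] [MeasurableSpace β] [MeasurableSpace γ]
    (U : Ω → α) (V : Ω → β) (Z : Ω → γ) (T : Ω → ℝ)
    (hU : Measurable U) (hV : Measurable V) (hZ : Measurable Z) (hT : Measurable T)
    (hT01 : ∀ ω, T ω = 0 ∨ T ω = 1)
    (hUT : CondIndepFun (MeasurableSpace.comap (fun ω => (V ω, Z ω)) inferInstance)
      ((hV.prodMk hZ).comap_le) U T μ)
    (hoverlap : ∀ᵐ ω ∂μ,
      0 < (μ[T | MeasurableSpace.comap (fun ω' => (V ω', Z ω')) inferInstance]) ω ∧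
      (μ[T | MeasurableSpace.comap (fun ω' => (V ω', Z ω')) inferInstance]) ω < 1) :
    CondIndepFun (MeasurableSpace.comap Z inferInstance) hZ.comap_le U V μ ↔
    CondIndepFun (MeasurableSpace.comap (fun ω => (Z ω, T ω)) inferInstance)
      ((hZ.prodMk hT).comap_le) U V μ := by
  have hVZT : MeasurableSpace.comap (fun ω ↦ (V ω, Z ω)) inferInstance ⊔
        MeasurableSpace.comap T inferInstance =
      MeasurableSpace.comap (fun ω ↦ (Z ω, T ω)) inferInstance ⊔
        MeasurableSpace.comap V inferInstance := by
    erw [MeasurableSpace.comap_prodMk, MeasurableSpace.comap_prodMk]; ac_rfl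
  have hZV : MeasurableSpace.comap Z inferInstance ⊔ MeasurableSpace.comap V inferInstance =
      MeasurableSpace.comap (fun ω ↦ (V ω, Z ω)) inferInstance := by
    erw [MeasurableSpace.comap_prodMk, sup_comm]
  have hUT' := (condIndepFun_iff_condExp_sup_comap_ae_eq _ hU hT).1 hUT
  rw [condIndepFun_iff_condExp_sup_comap_ae_eq _ hU hV,
    condIndepFun_iff_condExp_sup_comap_ae_eq _ hU hV, hZV, ← hVZT]
  refine forall₂_congr fun s hs ↦ ⟨fun h ↦ ?_, fun h ↦ ?_⟩
  · refine (condExp_ae_eq_condExp_of_aestronglyMeasurable (hVZT ▸ le_sup_left)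
      (sup_le (hV.prodMk hZ).comap_le hT.comap_le) ?_).symm
    exact (stronglyMeasurable_condExp.mono (measurable_fst.comp (comap_measurable _)).comap_le
      ).aestronglyMeasurable.congr ((hUT' s hs).trans h).symm
  · refine (condExp_ae_eq_condExp_of_aestronglyMeasurable
      (measurable_snd.comp (comap_measurable _)).comap_le (hV.prodMk hZ).comap_le ?_).symm
    exact AEStronglyMeasurable.comap_of_comap_prodMk
      (measurable_snd.comp (comap_measurable _)).comap_le hT hT01
      (hoverlap.mono fun _ hω ↦ hω.1.ne') stronglyMeasurable_condExp.aestronglyMeasurable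
      integrable_condExp
      (stronglyMeasurable_condExp.aestronglyMeasurable.congr (h.symm.trans (hUT' s hs)))

/-- equivalence property (14) of the paper, abstract form: let
`U, V, Z` be measurable maps into standard Borel spaces and `T : Ω → {0,1} ⊆ ℝ`
measurable.  Assume `U ⊥⊥ T | σ(V, Z)` and the overlap condition
`0 < E[T | σ(V, Z)] < 1` a.s.  Then `U ⊥⊥ V | σ(Z)` iff `U ⊥⊥ V | σ(Z, T)`. -/
theorem stmt18 {Ω : Type*} [MeasurableSpace Ω] [StandardBorelSpace Ω]
    (μ : Measure Ω) [IsProbabilityMeasure μ]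
    {α β γ : Type*}
    [MeasurableSpace α] [StandardBorelSpace α]
    [MeasurableSpace β] [StandardBorelSpace β]
    [MeasurableSpace γ] [StandardBorelSpace γ]
    (U : Ω → α) (V : Ω → β) (Z : Ω → γ) (T : Ω → ℝ)
    (hU : Measurable U) (hV : Measurable V) (hZ : Measurable Z) (hT : Measurable T)
    (hT01 : ∀ ω, T ω = 0 ∨ T ω = 1)
    (hUT : CondIndepFun (MeasurableSpace.comap (fun ω => (V ω, Z ω)) inferInstance)
      ((hV.prodMk hZ).comap_le) U T μ)
    (hoverlap : ∀ᵐ ω ∂μ,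
      0 < (μ[T | MeasurableSpace.comap (fun ω' => (V ω', Z ω')) inferInstance]) ω ∧
      (μ[T | MeasurableSpace.comap (fun ω' => (V ω', Z ω')) inferInstance]) ω < 1) :
    CondIndepFun (MeasurableSpace.comap Z inferInstance) hZ.comap_le U V μ ↔
    CondIndepFun (MeasurableSpace.comap (fun ω => (Z ω, T ω)) inferInstance)
      ((hZ.prodMk hT).comap_le) U V μ :=
  stmt18_general μ U V Z T hU hV hZ hT hT01 hUT hoverlap
end

section
/- (Key step of Theorem 1) Let Y and X be measurable maps from Ω into standard Borel spaces, let T : Ω → {0,1} ⊆ ℝ be measurable, and let 𝓜 ⊆ σ(X) be a sub-σ-algebra. Assume Y ⊥⊥ T | σ(X). Then Y ⊥⊥ T | 𝓜 if and only if for every bounded measurable real-valued function h, E[h(Y) | 𝓜] · E[T | 𝓜] = E[ E[h(Y) | σ(X)] · E[T | σ(X)] | 𝓜 ] μ-almost surely. -/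
/-!
Since `m ≤ σ(X)`, the tower property together with `Y ⊥⊥ T | σ(X)` turns the right-hand side
into `E[h(Y) T | m]`, so the claim is that `Y ⊥⊥ T | m` iff
`E[h(Y) T | m] = E[h(Y) | m] E[T | m]` for all bounded measurable `h`. For bounded real random
variables, the product rule for conditional expectations extends from indicators of the
generated σ-algebras to all bounded functions by linearity on simple functions and dominated
convergence. Conversely, `T` is `{0,1}`-valued, so every indicator `1_{T ∈ t}` is an affine
function of `T`, and the product rule for `h = 1_s` already yields the conditional independence
of the generating sets.
-/

open MeasureTheory ProbabilityTheory Filter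

lemma abs_indicator_one_le {α : Type*} (s : Set α) (a : α) :
    |s.indicator (1 : α → ℝ) a| ≤ 1 := by
  by_cases ha : a ∈ s <;> simp [ha]

section ProductRule

variable {Ω : Type*} {m mY mΩ : MeasurableSpace Ω} {μ : Measure Ω} [IsFiniteMeasure μ]
  {g : Ω → ℝ}

theorem condExp_simpleFunc_mul_ae_eq_mul (hmY : mY ≤ mΩ) (hg : Integrable g μ)
    (h_ind : ∀ s, MeasurableSet[mY] s →
      μ[s.indicator 1 * g | m] =ᵐ[μ] μ[s.indicator 1 | m] * μ[g | m])
    (φ : @SimpleFunc Ω mY ℝ) :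
    μ[⇑φ * g | m] =ᵐ[μ] μ[⇑φ | m] * μ[g | m] := by
  have h_int (ψ : @SimpleFunc Ω mY ℝ) : Integrable ψ μ := by
    simpa only [SimpleFunc.coe_toLargerSpace_eq] using
      (ψ.toLargerSpace hmY).integrable_of_isFiniteMeasure (μ := μ)
  induction φ using @SimpleFunc.induction Ω ℝ mY _ _ with
  | @const c s hs =>
    have h_coe : s.indicator (Function.const Ω c) = c • s.indicator 1 := by
      ext ω
      by_cases hω : ω ∈ s <;> simp [hω]
    simp only [SimpleFunc.coe_piecewise, SimpleFunc.coe_const, Function.const_zero,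
      Set.piecewise_eq_indicator]
    rw [h_coe, smul_mul_assoc]
    filter_upwards [condExp_smul (m := m) (μ := μ) c (s.indicator 1 * g),
      condExp_smul (m := m) (μ := μ) c (s.indicator (1 : Ω → ℝ)), h_ind s hs]
      with ω h₁ h₂ h₃
    simp only [h₁, h₂, Pi.smul_apply, Pi.mul_apply, h₃, smul_eq_mul, mul_assoc]
  | @add φ ψ _ hφ hψ =>
    rw [@SimpleFunc.coe_add Ω ℝ mY, add_mul]
    filter_upwards [condExp_add (hg.simpleFunc_mul' hmY φ) (hg.simpleFunc_mul' hmY ψ) m,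
      condExp_add (h_int φ) (h_int ψ) m, hφ, hψ] with ω h₁ h₂ h₃ h₄
    simp only [h₁, h₂, Pi.add_apply, Pi.mul_apply, h₃, h₄, add_mul]

theorem condExp_mul_ae_eq_mul_of_forall_indicator (hm : m ≤ mΩ) (hmY : mY ≤ mΩ)
    (hg : AEStronglyMeasurable g μ) {R : ℝ} (hgR : ∀ᵐ ω ∂μ, |g ω| ≤ R)
    (h_ind : ∀ s, MeasurableSet[mY] s →
      μ[s.indicator 1 * g | m] =ᵐ[μ] μ[s.indicator 1 | m] * μ[g | m])
    {f : Ω → ℝ} (hf : StronglyMeasurable[mY] f) {C : ℝ} (hfC : ∀ᵐ ω ∂μ, |f ω| ≤ C) :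
    μ[f * g | m] =ᵐ[μ] μ[f | m] * μ[g | m] := by
  have hgR' : ∀ᵐ ω ∂μ, ‖g ω‖ ≤ R := by simpa only [Real.norm_eq_abs] using hgR
  have hg_int : Integrable g μ := .of_bound hg R hgR'
  have h_condExp_g : ∀ᵐ ω ∂μ, ‖μ[g | m] ω‖ ≤ R := by
    simpa only [Real.norm_eq_abs] using ae_bdd_abs_condExp_of_ae_bdd_abs (m := m) hgR
  have pull_out (f' : Ω → ℝ) (hf' : Integrable f' μ) :
      μ[μ[g | m] * f' | m] =ᵐ[μ] μ[g | m] * μ[f' | m] :=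
    condExp_stronglyMeasurable_mul_of_bound hm stronglyMeasurable_condExp hf' R h_condExp_g
  set C' := max C 0
  have hfC' : ∀ᵐ ω ∂μ, ‖f ω‖ ≤ C' := by
    filter_upwards [hfC] with ω hω using hω.trans (le_max_left C 0)
  have hf_int : Integrable f μ := .of_bound (hf.mono hmY).aestronglyMeasurable C' hfC'
  set φ := hf.approxBounded C'
  have hφ_le := hf.norm_approxBounded_le (le_max_right C 0)
  have hφ_tendsto := hf.tendsto_approxBounded_ae hfC'
  have hφ_int (n : ℕ) : Integrable (φ n) μ :=
    .of_bound ((φ n).stronglyMeasurable.mono hmY).aestronglyMeasurable C'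
      (.of_forall (hφ_le n))
  have h_pulled : μ[f * g | m] =ᵐ[μ] μ[μ[g | m] * f | m] := by
    refine tendsto_condExp_unique (fun n => ⇑(φ n) * g) (fun n => μ[g | m] * ⇑(φ n))
      (f * g) (μ[g | m] * f) (fun n => hg_int.simpleFunc_mul' hmY (φ n))
      (fun n => (hφ_int n).bdd_mul (stronglyMeasurable_condExp.mono hm).aestronglyMeasurable
        h_condExp_g) ?_ ?_ (fun _ => C' * R) (integrable_const _) (fun _ => R * C')
      (integrable_const _) (fun n => ?_) (fun n => ?_) (fun n => ?_)
    · filter_upwards [hφ_tendsto] with ω hω using hω.mul tendsto_const_nhds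
    · filter_upwards [hφ_tendsto] with ω hω using hω.const_mul _
    · filter_upwards [hgR'] with ω hω
      simpa only [Pi.mul_apply, norm_mul] using
        mul_le_mul (hφ_le n ω) hω (norm_nonneg _) (le_max_right C 0)
    · filter_upwards [h_condExp_g] with ω hω
      simpa only [Pi.mul_apply, norm_mul] using
        mul_le_mul hω (hφ_le n ω) (norm_nonneg _) ((norm_nonneg _).trans hω)
    · refine (condExp_simpleFunc_mul_ae_eq_mul hmY hg_int h_ind (φ n)).trans ?_
      rw [mul_comm]
      exact (pull_out _ (hφ_int n)).symm
  rw [mul_comm (μ[f | m])]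
  exact h_pulled.trans (pull_out f hf_int)

end ProductRule

section CondIndep

variable {Ω β : Type*} {m mΩ : MeasurableSpace Ω} [StandardBorelSpace Ω] {hm : m ≤ mΩ}
  {μ : Measure Ω} [IsFiniteMeasure μ]

theorem CondIndepFun.condExp_mul_ae_eq_mul {F G : Ω → ℝ} (hFG : CondIndepFun m hm F G μ)
    (hF : Measurable F) (hG : Measurable G) {C D : ℝ} (hFC : ∀ᵐ ω ∂μ, |F ω| ≤ C)
    (hGD : ∀ᵐ ω ∂μ, |G ω| ≤ D) :
    μ[F * G | m] =ᵐ[μ] μ[F | m] * μ[G | m] := by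
  have h_sets := (condIndepFun_iff m hm F G hF hG μ).1 hFG
  -- extend the product rule in `F` against indicators of `σ(G)`, then in `G` against `F`
  have h_indicator_G (t : Set Ω) (ht : MeasurableSet[.comap G inferInstance] t) :
      μ[F * t.indicator 1 | m] =ᵐ[μ] μ[F | m] * μ[t.indicator 1 | m] :=
    condExp_mul_ae_eq_mul_of_forall_indicator (g := t.indicator 1) hm hF.comap_le
      (measurable_const.indicator (hG.comap_le t ht)).aestronglyMeasurable
      (.of_forall (abs_indicator_one_le t))
      (fun s hs => by rw [← Set.inter_indicator_one]; exact h_sets s t hs ht)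
      (comap_measurable F).stronglyMeasurable hFC
  have h_GF := condExp_mul_ae_eq_mul_of_forall_indicator hm hG.comap_le
    hF.aestronglyMeasurable hFC
    (fun t ht => by rw [mul_comm, mul_comm (μ[_ | m])]; exact h_indicator_G t ht)
    (comap_measurable G).stronglyMeasurable hGD
  rwa [mul_comm, mul_comm (μ[F | m])]

theorem condIndepFun_of_forall_condExp_indicator_mul [MeasurableSpace β] {Y : Ω → β}
    {T : Ω → ℝ} (hY : Measurable Y) (hT : Measurable T) (hT01 : ∀ ω, T ω = 0 ∨ T ω = 1)
    (h : ∀ s, MeasurableSet s →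
      μ[(Y ⁻¹' s).indicator 1 * T | m] =ᵐ[μ] μ[(Y ⁻¹' s).indicator 1 | m] * μ[T | m]) :
    CondIndepFun m hm Y T μ := by
  rw [condIndepFun_iff_condExp_inter_preimage_eq_mul hY hT]
  intro s t hs ht
  obtain ⟨a, b, hab⟩ : ∃ a b : ℝ, (T ⁻¹' t).indicator 1 = (fun _ => a) + b • T := by
    refine ⟨t.indicator 1 0, t.indicator 1 1 - t.indicator 1 0, funext fun ω => ?_⟩
    show t.indicator 1 (T ω) = _
    rcases hT01 ω with hω | hω <;> simp [hω]
  have h_s := h s hs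
  set A := (Y ⁻¹' s).indicator (1 : Ω → ℝ) with hA
  have hT_int : Integrable T μ := .of_bound hT.aestronglyMeasurable 1
    (.of_forall fun ω => by rcases hT01 ω with hω | hω <;> simp [hω])
  have hA_int : Integrable A μ := (integrable_const 1).indicator (hY hs)
  have hAT_int : Integrable (A * T) μ := hT_int.bdd_mul hA_int.aestronglyMeasurable
    (.of_forall fun ω => Real.norm_eq_abs _ ▸ abs_indicator_one_le _ ω)
  have h_split : A * ((fun _ => a) + b • T) = a • A + b • (A * T) := by
    ext ω
    simp only [Pi.mul_apply, Pi.add_apply, Pi.smul_apply, smul_eq_mul]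
    ring
  rw [← Pi.one_def, Set.inter_indicator_one, ← hA, hab, h_split]
  filter_upwards [condExp_add (hA_int.smul a) (hAT_int.smul b) m,
    condExp_smul (m := m) (μ := μ) a A, condExp_smul (m := m) (μ := μ) b (A * T), h_s,
    condExp_add (integrable_const a) (hT_int.smul b) m, condExp_smul (m := m) (μ := μ) b T]
    with ω h₁ h₂ h₃ h₄ h₅ h₆
  simp only [h₁, h₂, h₃, h₄, h₅, h₆, Pi.add_apply, Pi.smul_apply, Pi.mul_apply, smul_eq_mul,
    condExp_const hm]
  ring

theorem condIndepFun_iff_forall_condExp_comp_mul [MeasurableSpace β] {Y : Ω → β}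
    {T : Ω → ℝ} (hY : Measurable Y) (hT : Measurable T) (hT01 : ∀ ω, T ω = 0 ∨ T ω = 1) :
    CondIndepFun m hm Y T μ ↔ ∀ h : β → ℝ, Measurable h → (∃ C : ℝ, ∀ x, |h x| ≤ C) →
      μ[(h ∘ Y) * T | m] =ᵐ[μ] μ[h ∘ Y | m] * μ[T | m] := by
  refine ⟨fun hYT h hh ⟨C, hC⟩ => ?_, fun H => ?_⟩
  · exact CondIndepFun.condExp_mul_ae_eq_mul (D := 1) (hYT.comp hh measurable_id) (hh.comp hY)
      hT (.of_forall fun ω => hC (Y ω))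
      (.of_forall fun ω => by rcases hT01 ω with hω | hω <;> simp [hω])
  · exact condIndepFun_of_forall_condExp_indicator_mul hY hT hT01 fun s hs =>
      H (s.indicator 1) (measurable_const.indicator hs) ⟨1, abs_indicator_one_le s⟩

end CondIndep

/-- key step of Theorem 1: let `Y, X` be measurable maps into
standard Borel spaces, `T : Ω → {0,1} ⊆ ℝ` measurable, and `m ⊆ σ(X)` a
sub-σ-algebra.  Assume `Y ⊥⊥ T | σ(X)`.  Then `Y ⊥⊥ T | m` iff for every bounded
measurable `h : β → ℝ`,
`E[h(Y) | m] · E[T | m] = E[ E[h(Y) | σ(X)] · E[T | σ(X)] | m ]` a.s. -/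
theorem stmt19 {Ω : Type*} [MeasurableSpace Ω] [StandardBorelSpace Ω]
    (μ : Measure Ω) [IsProbabilityMeasure μ]
    {β ξ : Type*}
    [MeasurableSpace β] [StandardBorelSpace β]
    [MeasurableSpace ξ] [StandardBorelSpace ξ]
    (Y : Ω → β) (X : Ω → ξ) (T : Ω → ℝ)
    (hY : Measurable Y) (hX : Measurable X) (hT : Measurable T)
    (hT01 : ∀ ω, T ω = 0 ∨ T ω = 1)
    (m : MeasurableSpace Ω)
    (hm : m ≤ MeasurableSpace.comap X inferInstance)
    (hYT : CondIndepFun (MeasurableSpace.comap X inferInstance) hX.comap_le Y T μ) :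
    CondIndepFun m (hm.trans hX.comap_le) Y T μ ↔
    ∀ h : β → ℝ, Measurable h → (∃ C : ℝ, ∀ x, |h x| ≤ C) →
      (fun ω => (μ[(fun ω' => h (Y ω')) | m]) ω * (μ[T | m]) ω)
        =ᵐ[μ]
      μ[(fun ω => (μ[(fun ω' => h (Y ω')) | MeasurableSpace.comap X inferInstance]) ω
          * (μ[T | MeasurableSpace.comap X inferInstance]) ω) | m] := by
  have tower (h : β → ℝ) (hh : Measurable h) (hC : ∃ C : ℝ, ∀ x, |h x| ≤ C) :
      μ[μ[h ∘ Y | .comap X inferInstance] * μ[T | .comap X inferInstance] | m]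
        =ᵐ[μ] μ[(h ∘ Y) * T | m] :=
    (condExp_congr_ae
      ((condIndepFun_iff_forall_condExp_comp_mul hY hT hT01).1 hYT h hh hC).symm).trans
      (condExp_condExp_of_le hm hX.comap_le)
  rw [condIndepFun_iff_forall_condExp_comp_mul hY hT hT01]
  exact forall₃_congr fun h hh hC =>
    ⟨fun H => H.symm.trans (tower h hh hC).symm, fun H => (tower h hh hC).symm.trans H.symm⟩
end
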